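/- arXiv:2505.13642 — 11 statements merged into one kernel-verified Lean document; each statement's English description precedes it below -/
import Mathlib

section
/- For additively separable hedonic games on n ≥ 2 agents with arbitrary real weights (declaration domain D = all weight profiles), no strategyproof mechanism satisfies the bounded approximation property: every mechanism M : D → partitions that satisfies BAPX fails strategyproofness. -/
noncomputable section

open Finset

/-- A partition of the agents `Fin n`, given by the block (coalition) of each agent. -/
structure HGPartition (n : ℕ) where
  block : Fin n → Finset (Fin n)
  mem_block : ∀ i, i ∈ block i
  block_eq : ∀ i j, j ∈ block i → block j = block i

/-- ASHG utility of an agent with score row `wi` for a coalition `C` containing her. -/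
def uA {n : ℕ} (wi : Fin n → ℝ) (C : Finset (Fin n)) : ℝ :=
  ∑ j ∈ C, wi j

/-- FHG utility of an agent with score row `wi` for a coalition `C` containing her. -/
def uF {n : ℕ} (wi : Fin n → ℝ) (C : Finset (Fin n)) : ℝ :=
  (∑ j ∈ C, wi j) / C.card

/-- Utilitarian social welfare in ASHGs. -/
def swA {n : ℕ} (w : Fin n → Fin n → ℝ) (π : HGPartition n) : ℝ :=
  ∑ i, uA (w i) (π.block i)

/-- Utilitarian social welfare in FHGs. -/
def swF {n : ℕ} (w : Fin n → Fin n → ℝ) (π : HGPartition n) : ℝ :=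
  ∑ i, uF (w i) (π.block i)

/-- A weight profile has zero scores on the diagonal. -/
def ZeroDiag {n : ℕ} (w : Fin n → Fin n → ℝ) : Prop := ∀ i, w i i = 0

/-- Strategyproofness for ASHGs on the domain of all (zero-diagonal) weight profiles. -/
def SP_A {n : ℕ} (M : (Fin n → Fin n → ℝ) → HGPartition n) : Prop :=
  ∀ (i : Fin n) (wi di : Fin n → ℝ) (d : Fin n → Fin n → ℝ),
    wi i = 0 → di i = 0 → ZeroDiag d →
    uA wi ((M (Function.update d i di)).block i) ≤
      uA wi ((M (Function.update d i wi)).block i)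

/-- Bounded approximation property for ASHGs: some `r ≥ 1` bounds `opt_d / SW_d(M(d))`,
i.e. every partition's welfare is at most `r` times that of the mechanism's output. -/
def BAPX_A {n : ℕ} (M : (Fin n → Fin n → ℝ) → HGPartition n) : Prop :=
  ∃ r : ℝ, 1 ≤ r ∧ ∀ d : Fin n → Fin n → ℝ, ZeroDiag d →
    ∀ π : HGPartition n, swA d π ≤ r * swA d (M d)

/-!
Let agent `i` value `j` at `a` and agent `j` value `i` at `b`, all other scores being zero. The
welfare of a partition is then `a + b` if `i` and `j` share a block and `0` otherwise, so a mechanism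
with bounded approximation ratio must separate them when `a + b < 0` and join them when
`a + b > 0`. With `b = -2`, agent `i` whose true score is `a = 1` is left alone, but by declaring
`a = 3` she gets to share a block with `j`, which she values at `1 > 0`.
-/

namespace HGPartition

variable {n : ℕ}

def singletons (n : ℕ) : HGPartition n where
  block i := {i}
  mem_block := mem_singleton_self
  block_eq _ _ h := by rw [mem_singleton.mp h]

def grandCoalition (n : ℕ) : HGPartition n where
  block _ := univ
  mem_block := mem_univ
  block_eq _ _ _ := rfl

theorem mem_block_comm (π : HGPartition n) {i j : Fin n} : j ∈ π.block i ↔ i ∈ π.block j :=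
  ⟨fun h => π.block_eq i j h ▸ π.mem_block i, fun h => π.block_eq j i h ▸ π.mem_block j⟩

end HGPartition

section PairProfile

variable {n : ℕ} {i j : Fin n}

/-- The profile in which `i` scores `j` at `a`, `j` scores `i` at `b`, and all other scores vanish. -/
def pairProfile (i j : Fin n) (a b : ℝ) : Fin n → Fin n → ℝ :=
  Function.update (Pi.single j (Pi.single i b)) i (Pi.single j a)

theorem pairProfile_apply_left (a b : ℝ) : pairProfile i j a b i = Pi.single j a :=
  Function.update_self ..

theorem pairProfile_apply_right (hij : i ≠ j) (a b : ℝ) : pairProfile i j a b j = Pi.single i b := by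
  rw [pairProfile, Function.update_of_ne hij.symm, Pi.single_eq_same]

theorem pairProfile_apply_of_ne {k : Fin n} (hki : k ≠ i) (hkj : k ≠ j) (a b : ℝ) :
    pairProfile i j a b k = 0 := by
  rw [pairProfile, Function.update_of_ne hki, Pi.single_eq_of_ne hkj]

theorem update_pairProfile (a a' b : ℝ) :
    Function.update (pairProfile i j a b) i (Pi.single j a') = pairProfile i j a' b :=
  Function.update_idem ..

theorem zeroDiag_pairProfile (hij : i ≠ j) (a b : ℝ) : ZeroDiag (pairProfile i j a b) := by
  intro k
  by_cases hki : k = i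
  · subst hki; rw [pairProfile_apply_left, Pi.single_eq_of_ne hij]
  by_cases hkj : k = j
  · subst hkj; rw [pairProfile_apply_right hij, Pi.single_eq_of_ne hij.symm]
  · rw [pairProfile_apply_of_ne hki hkj, Pi.zero_apply]

theorem uA_single (a : ℝ) (C : Finset (Fin n)) : uA (Pi.single j a) C = if j ∈ C then a else 0 :=
  sum_pi_single' j a C

theorem uA_zero (C : Finset (Fin n)) : uA 0 C = 0 :=
  sum_const_zero

theorem swA_pairProfile (hij : i ≠ j) (a b : ℝ) (π : HGPartition n) :
    swA (pairProfile i j a b) π = if j ∈ π.block i then a + b else 0 := by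
  rw [swA, Fintype.sum_eq_add i j hij fun k ⟨hki, hkj⟩ => by
      rw [pairProfile_apply_of_ne hki hkj, uA_zero],
    pairProfile_apply_left, pairProfile_apply_right hij, uA_single, uA_single]
  by_cases hjoin : j ∈ π.block i
  · rw [if_pos hjoin, if_pos hjoin, if_pos (π.mem_block_comm.mp hjoin)]
  · rw [if_neg hjoin, if_neg hjoin, if_neg (mt π.mem_block_comm.mpr hjoin), add_zero]

end PairProfile

namespace BAPX_A

variable {n : ℕ} {M : (Fin n → Fin n → ℝ) → HGPartition n} {i j : Fin n}

theorem notMem_block_of_add_neg (hM : BAPX_A M) (hij : i ≠ j) {a b : ℝ} (hab : a + b < 0) :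
    j ∉ (M (pairProfile i j a b)).block i := by
  intro hjoin
  obtain ⟨r, hr, happrox⟩ := hM
  have h := happrox _ (zeroDiag_pairProfile hij a b) (HGPartition.singletons n)
  simp only [swA_pairProfile hij, hjoin, HGPartition.singletons, mem_singleton, hij.symm,
    if_true, if_false] at h
  nlinarith

theorem mem_block_of_add_pos (hM : BAPX_A M) (hij : i ≠ j) {a b : ℝ} (hab : 0 < a + b) :
    j ∈ (M (pairProfile i j a b)).block i := by
  by_contra hsep
  obtain ⟨r, -, happrox⟩ := hM
  have h := happrox _ (zeroDiag_pairProfile hij a b) (HGPartition.grandCoalition n)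
  simp only [swA_pairProfile hij, hsep, HGPartition.grandCoalition, mem_univ, if_true,
    if_false, mul_zero] at h
  linarith

end BAPX_A

theorem no_SP_mechanism_is_BAPX_ASHG (n : ℕ) (hn : 2 ≤ n)
    (M : (Fin n → Fin n → ℝ) → HGPartition n) (hM : BAPX_A M) :
    ¬ SP_A M := by
  intro hSP
  let i : Fin n := ⟨0, by omega⟩
  let j : Fin n := ⟨1, by omega⟩
  have hij : i ≠ j := by simp [i, j, Fin.ext_iff]
  have hmanip := hSP i (Pi.single j 1) (Pi.single j 3) (pairProfile i j 0 (-2))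
    (Pi.single_eq_of_ne hij 1) (Pi.single_eq_of_ne hij 3) (zeroDiag_pairProfile hij 0 (-2))
  rw [update_pairProfile, update_pairProfile, uA_single, uA_single,
    if_pos (hM.mem_block_of_add_pos hij (by norm_num)),
    if_neg (hM.notMem_block_of_add_neg hij (by norm_num))] at hmanip
  norm_num at hmanip
end
end

section
/- For fractional hedonic games on n ≥ 2 agents with arbitrary real weights (declaration domain D = all weight profiles), no strategyproof mechanism satisfies the bounded approximation property: every mechanism M : D → partitions that satisfies BAPX fails strategyproofness. -/
noncomputable section

open Finset

/-- Strategyproofness for FHGs on the domain of all (zero-diagonal) weight profiles. -/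
def SP_F {n : ℕ} (M : (Fin n → Fin n → ℝ) → HGPartition n) : Prop :=
  ∀ (i : Fin n) (wi di : Fin n → ℝ) (d : Fin n → Fin n → ℝ),
    wi i = 0 → di i = 0 → ZeroDiag d →
    uF wi ((M (Function.update d i di)).block i) ≤
      uF wi ((M (Function.update d i wi)).block i)

/-- Bounded approximation property for FHGs. -/
def BAPX_F {n : ℕ} (M : (Fin n → Fin n → ℝ) → HGPartition n) : Prop :=
  ∃ r : ℝ, 1 ≤ r ∧ ∀ d : Fin n → Fin n → ℝ, ZeroDiag d →
    ∀ π : HGPartition n, swF d π ≤ r * swF d (M d)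


-- helper: swF of a profile in which only the rows of `a` and `b` can be nonzero
lemma swF_W {n : ℕ} (a b : Fin n) (hab : a ≠ b) (x : ℝ) (π : HGPartition n) :
    swF (fun i j => if i = a ∧ j = b then x else if i = b ∧ j = a then (2:ℝ) else 0) π
    = (if b ∈ π.block a then x else 0) / (π.block a).card
      + (if a ∈ π.block b then 2 else 0) / (π.block b).card := by
  unfold swF uF
  rw [← Finset.sum_subset (Finset.subset_univ ({a, b} : Finset (Fin n)))]
  · rw [Finset.sum_pair hab]
    congr 1
    · congr 1
      simp [hab, Finset.sum_ite_eq']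
    · congr 1
      simp [hab.symm, Finset.sum_ite_eq']
  · intro i _ hi
    simp only [Finset.mem_insert, Finset.mem_singleton, not_or] at hi
    simp [hi.1, hi.2]

lemma mem_block_symm {n : ℕ} (π : HGPartition n) {a b : Fin n} (h : b ∈ π.block a) :
    a ∈ π.block b := by
  rw [π.block_eq a b h]; exact π.mem_block a

theorem no_SP_mechanism_is_BAPX_FHG (n : ℕ) (hn : 2 ≤ n)
    (M : (Fin n → Fin n → ℝ) → HGPartition n) (hM : BAPX_F M) :
    ¬ SP_F M := by
  obtain ⟨r, hr1, hr⟩ := hM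
  intro hSP
  set a : Fin n := ⟨0, by omega⟩ with ha
  set b : Fin n := ⟨1, by omega⟩ with hb
  have hab : a ≠ b := by
    simp only [ha, hb, ne_eq, Fin.mk.injEq]
    omega
  -- base declaration and the two rows of agent a
  set d : Fin n → Fin n → ℝ := fun i j => if i = b ∧ j = a then 2 else 0 with hd
  set wi : Fin n → ℝ := fun j => if j = b then (-1 : ℝ) else 0 with hwi
  set di : Fin n → ℝ := fun j => if j = b then (-4 : ℝ) else 0 with hdi
  have hupd : ∀ x : ℝ, Function.update d a (fun j => if j = b then x else 0)
      = fun i j => if i = a ∧ j = b then x else if i = b ∧ j = a then (2:ℝ) else 0 := by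
    intro x
    funext i j
    rcases eq_or_ne i a with h | h
    · subst h
      simp [Function.update_self, hab]
    · simp [Function.update_of_ne h, hd, h]
  have hZd : ZeroDiag d := by
    intro i
    simp only [hd]
    split_ifs with h
    · exact absurd (h.1.symm.trans h.2) (Ne.symm hab)
    · rfl
  have hZW : ∀ x : ℝ, ZeroDiag
      (fun i j => if i = a ∧ j = b then x else if i = b ∧ j = a then (2:ℝ) else 0) := by
    intro x i
    dsimp only
    split_ifs with h1 h2
    · exact absurd (h1.1.symm.trans h1.2) hab
    · exact absurd (h2.1.symm.trans h2.2) (Ne.symm hab)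
    · rfl
  -- the singleton partition and the pair partition
  have hmem_singleton : ∀ i : Fin n, i ∈ ({i} : Finset (Fin n)) := fun i =>
    Finset.mem_singleton_self i
  set π0 : HGPartition n :=
    ⟨fun i => {i}, hmem_singleton, fun i j hj => by
      rw [Finset.mem_singleton] at hj; rw [hj]⟩ with hπ0
  set πp : HGPartition n :=
    ⟨fun i => if i = a ∨ i = b then {a, b} else {i},
     fun i => by
       by_cases h : i = a ∨ i = b
       · rcases h with h | h <;> simp [h]
       · simp [h],
     fun i j hj => by
       by_cases h : i = a ∨ i = b
       · rw [if_pos h] at hj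
         rw [Finset.mem_insert, Finset.mem_singleton] at hj
         rw [if_pos h, if_pos hj]
       · rw [if_neg h, Finset.mem_singleton] at hj
         rw [hj]⟩ with hπp
  -- welfare of these two partitions under profile with a-row x
  have hcard : ∀ (π : HGPartition n) (i : Fin n), 0 < ((π.block i).card : ℝ) := by
    intro π i
    exact_mod_cast Finset.card_pos.mpr ⟨i, π.mem_block i⟩
  have hsw0 : ∀ x : ℝ, swF
      (fun i j => if i = a ∧ j = b then x else if i = b ∧ j = a then (2:ℝ) else 0) π0 = 0 := by
    intro x
    rw [swF_W a b hab]
    simp [hπ0, hab, hab.symm]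
  have hswp : ∀ x : ℝ, swF
      (fun i j => if i = a ∧ j = b then x else if i = b ∧ j = a then (2:ℝ) else 0) πp
      = x / 2 + 1 := by
    intro x
    rw [swF_W a b hab]
    have hba : πp.block a = {a, b} := by simp [hπp]
    have hbb : πp.block b = {a, b} := by simp [hπp]
    have hc : ({a, b} : Finset (Fin n)).card = 2 := Finset.card_pair hab
    rw [hba, hbb, hc]
    have h1 : b ∈ ({a, b} : Finset (Fin n)) := by simp
    have h2 : a ∈ ({a, b} : Finset (Fin n)) := by simp
    rw [if_pos h1, if_pos h2]
    norm_num
  -- truthful profile outcome: a and b together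
  set wt : Fin n → Fin n → ℝ :=
    fun i j => if i = a ∧ j = b then (-1:ℝ) else if i = b ∧ j = a then (2:ℝ) else 0 with hwt
  set wm : Fin n → Fin n → ℝ :=
    fun i j => if i = a ∧ j = b then (-4:ℝ) else if i = b ∧ j = a then (2:ℝ) else 0 with hwm
  have hbt : b ∈ (M wt).block a := by
    by_contra hc
    have hat : a ∉ (M wt).block b := fun h => hc (mem_block_symm (M wt) h)
    have h1 : swF wt (M wt) = 0 := by
      rw [hwt, swF_W a b hab, if_neg hc, if_neg hat]
      simp
    have h2 := hr wt (hZW (-1)) πp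
    rw [h1, hwt, hswp (-1)] at h2
    norm_num at h2
  -- misreport profile outcome: a and b apart
  have hbm : b ∉ (M wm).block a := by
    intro hc
    have hat : a ∈ (M wm).block b := mem_block_symm (M wm) hc
    have hbeq : (M wm).block b = (M wm).block a := (M wm).block_eq a b hc
    have h1 : swF wm (M wm) = -2 / ((M wm).block a).card := by
      rw [hwm, swF_W a b hab, if_pos hc, if_pos hat, hbeq]
      ring
    have h2 := hr wm (hZW (-4)) π0
    rw [hwm, hsw0 (-4), h1] at h2
    have hk := hcard (M wm) a
    have hneg : r * (-2 / ((M wm).block a).card) < 0 := by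
      apply mul_neg_of_pos_of_neg (by linarith)
      exact div_neg_of_neg_of_pos (by norm_num) hk
    linarith
  -- strategyproofness violated
  have hsp := hSP a wi di d (by rw [hwi]; exact if_neg hab) (by rw [hdi]; exact if_neg hab) hZd
  rw [show Function.update d a di = wm from hupd (-4),
      show Function.update d a wi = wt from hupd (-1)] at hsp
  have hL : uF wi ((M wm).block a) = 0 := by
    unfold uF
    rw [hwi]
    rw [Finset.sum_ite_eq' ((M wm).block a) b (fun _ => (-1:ℝ))]
    rw [if_neg hbm]
    simp
  have hR : uF wi ((M wt).block a) = -1 / ((M wt).block a).card := by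
    unfold uF
    rw [hwi]
    rw [Finset.sum_ite_eq' ((M wt).block a) b (fun _ => (-1:ℝ))]
    rw [if_pos hbt]
  rw [hL, hR] at hsp
  have hk := hcard (M wt) a
  have : (-1:ℝ) / ((M wt).block a).card < 0 := div_neg_of_neg_of_pos (by norm_num) hk
  linarith
end
end

section
/- For additively separable hedonic games with arbitrary real weights: for every agent i, every declaration d_i of i, and every subset C of the agents with i ∈ C, there exists a declaration d_{-i} of the other agents such that in every partition π maximizing the social welfare of the instance (d_i, d_{-i}), the block of i equals C, i.e. π(i) = C. -/
noncomputable section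

open Finset

theorem exists_declaration_forcing_coalition_ASHG (n : ℕ) (i : Fin n)
    (di : Fin n → ℝ) (hdi : di i = 0) (C : Finset (Fin n)) (hiC : i ∈ C) :
    ∃ d : Fin n → Fin n → ℝ, ZeroDiag d ∧ d i = di ∧
      ∀ π : HGPartition n, (∀ π' : HGPartition n, swA d π' ≤ swA d π) →
        π.block i = C := by
  classical
  set D : ℝ := ∑ j, |di j| with hD
  have hDnn : (0:ℝ) ≤ D := Finset.sum_nonneg fun j _ => abs_nonneg _
  have habs : ∀ j, |di j| ≤ D := fun j =>
    Finset.single_le_sum (fun k _ => abs_nonneg (di k)) (Finset.mem_univ j)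
  set B : ℝ := D + 1 with hB
  set w : Fin n → ℝ := fun j => if j ∈ C then B else -B with hw
  set g : Fin n → ℝ := fun j => di j + (if j = i then 0 else w j) with hg
  set d : Fin n → Fin n → ℝ :=
    fun j k => if j = i then di k else if k = i then w j else 0 with hd
  have hsym : ∀ (π : HGPartition n) (a b : Fin n), a ∈ π.block b ↔ b ∈ π.block a := by
    intro π a b
    constructor <;> intro h
    · have := π.block_eq b a h; rw [this]; exact π.mem_block b
    · have := π.block_eq a b h; rw [this]; exact π.mem_block a
  -- key formula: social welfare depends only on i's block
  have key : ∀ π : HGPartition n, swA d π = ∑ j ∈ π.block i, g j := by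
    intro π
    have hsplit_univ : swA d π =
        (∑ k ∈ π.block i, di k) + ∑ j ∈ Finset.univ.erase i, ∑ k ∈ π.block j, d j k := by
      unfold swA uA
      rw [← Finset.add_sum_erase _ _ (Finset.mem_univ i)]
      congr 1
      apply Finset.sum_congr rfl
      intro k _
      simp [hd]
    have h2 : ∀ j ∈ Finset.univ.erase i,
        (∑ k ∈ π.block j, d j k) = if j ∈ π.block i then w j else 0 := by
      intro j hj
      have hji : j ≠ i := Finset.ne_of_mem_erase hj
      have hstep : (∑ k ∈ π.block j, d j k)
          = ∑ k ∈ π.block j, (if k = i then w j else 0) := by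
        apply Finset.sum_congr rfl; intro k _; simp [hd, hji]
      rw [hstep, Finset.sum_ite_eq' (π.block j) i (fun _ => w j)]
      simp only [hsym π i j]
    have h3 : ∑ j ∈ Finset.univ.erase i, (if j ∈ π.block i then w j else 0)
        = ∑ j ∈ (π.block i).erase i, w j := by
      rw [← Finset.sum_filter]
      apply Finset.sum_congr _ (fun _ _ => rfl)
      ext j
      simp only [Finset.mem_filter, Finset.mem_erase, Finset.mem_univ, and_true, true_and]
    have h4 : ∑ j ∈ π.block i, (if j = i then 0 else w j)
        = ∑ j ∈ (π.block i).erase i, w j := by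
      rw [← Finset.add_sum_erase _ _ (π.mem_block i), if_pos rfl, zero_add]
      exact Finset.sum_congr rfl fun j hj => if_neg (Finset.ne_of_mem_erase hj)
    have hrhs : ∑ j ∈ π.block i, g j
        = (∑ j ∈ π.block i, di j) + ∑ j ∈ (π.block i).erase i, w j := by
      simp only [hg]
      rw [Finset.sum_add_distrib, h4]
    rw [hrhs, hsplit_univ, Finset.sum_congr rfl h2, h3]
  -- the partition with block C and singletons elsewhere
  set πstar : HGPartition n :=
    { block := fun j => if j ∈ C then C else {j}
      mem_block := by intro j; by_cases h : j ∈ C <;> simp [h]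
      block_eq := by
        intro a b hb
        by_cases ha : a ∈ C
        · rw [if_pos ha] at hb
          rw [if_pos hb, if_pos ha]
        · rw [if_neg ha, Finset.mem_singleton] at hb
          subst hb
          rfl } with hπstar
  have hblockstar : πstar.block i = C := by simp [hπstar, hiC]
  refine ⟨d, ?_, ?_, ?_⟩
  · intro j
    by_cases h : j = i
    · simp [hd, h, hdi]
    · simp [hd, h]
  · funext k; simp [hd]
  · intro π hmax
    have h1 : ∑ j ∈ C, g j ≤ ∑ j ∈ π.block i, g j := by
      have := hmax πstar
      rwa [key, key, hblockstar] at this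
    have gC : ∀ j ∈ C, 0 ≤ g j := by
      intro j hj
      by_cases h : j = i
      · simp [hg, h, hdi]
      · simp only [hg, if_neg h, hw, if_pos hj, hB]
        have := habs j
        have := neg_abs_le (di j)
        linarith
    have gCpos : ∀ j ∈ C, j ≠ i → 1 ≤ g j := by
      intro j hj h
      simp only [hg, if_neg h, hw, if_pos hj, hB]
      have := habs j
      have := neg_abs_le (di j)
      linarith
    have gneg : ∀ j, j ∉ C → g j ≤ -1 := by
      intro j hj
      have h : j ≠ i := by rintro rfl; exact hj hiC
      simp only [hg, if_neg h, hw, if_neg hj, hB]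
      have := habs j
      have := le_abs_self (di j)
      linarith
    set S := π.block i with hS
    have hiS : i ∈ S := π.mem_block i
    have hsplitS : ∑ j ∈ S ∩ C, g j + ∑ j ∈ S \ C, g j = ∑ j ∈ S, g j :=
      Finset.sum_inter_add_sum_sdiff S C g
    have hsplitC : ∑ j ∈ C ∩ S, g j + ∑ j ∈ C \ S, g j = ∑ j ∈ C, g j :=
      Finset.sum_inter_add_sum_sdiff C S g
    have hic : S ∩ C = C ∩ S := Finset.inter_comm S C
    rw [hic] at hsplitS
    have h2 : ∑ j ∈ C \ S, g j ≤ ∑ j ∈ S \ C, g j := by linarith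
    have hCS_nonneg : 0 ≤ ∑ j ∈ C \ S, g j :=
      Finset.sum_nonneg fun j hj => gC j (Finset.mem_sdiff.mp hj).1
    have hSC_empty : S \ C = ∅ := by
      by_contra hne
      obtain ⟨j0, hj0⟩ := Finset.nonempty_iff_ne_empty.mpr hne
      have hbound : ∑ j ∈ S \ C, g j ≤ -1 := by
        calc ∑ j ∈ S \ C, g j ≤ ∑ _j ∈ S \ C, (-1 : ℝ) :=
              Finset.sum_le_sum fun j hj => gneg j (Finset.mem_sdiff.mp hj).2
          _ = -((S \ C).card : ℝ) := by simp
          _ ≤ -1 := by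
              have hc : 1 ≤ (S \ C).card := Finset.card_pos.mpr ⟨j0, hj0⟩
              have hc' : (1:ℝ) ≤ ((S \ C).card : ℝ) := by exact_mod_cast hc
              linarith
      linarith
    have hCS_empty : C \ S = ∅ := by
      by_contra hne
      obtain ⟨j0, hj0⟩ := Finset.nonempty_iff_ne_empty.mpr hne
      have hj0' := Finset.mem_sdiff.mp hj0
      have hne_i : j0 ≠ i := by rintro rfl; exact hj0'.2 hiS
      have hbound : 1 ≤ ∑ j ∈ C \ S, g j := by
        calc (1:ℝ) ≤ g j0 := gCpos j0 hj0'.1 hne_i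
          _ ≤ ∑ j ∈ C \ S, g j :=
              Finset.single_le_sum (fun j hj => gC j (Finset.mem_sdiff.mp hj).1) hj0
      rw [hSC_empty] at h2
      simp only [Finset.sum_empty] at h2
      linarith
    exact Finset.Subset.antisymm
      (Finset.sdiff_eq_empty_iff_subset.mp hSC_empty)
      (Finset.sdiff_eq_empty_iff_subset.mp hCS_empty)
end
end

section
/- For additively separable hedonic games with arbitrary real weights (declaration domain D = all weight profiles), every optimal mechanism is non-obviously manipulable. -/
noncomputable section

open Finset

/-- The set of ASHG utilities (w.r.t. true row `wi`) agent `i` can obtain under `M`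
when declaring `di`, as the others' declarations range over the domain. -/
def utilSetA {n : ℕ} (M : (Fin n → Fin n → ℝ) → HGPartition n)
    (i : Fin n) (wi di : Fin n → ℝ) : Set ℝ :=
  {x : ℝ | ∃ d : Fin n → Fin n → ℝ, ZeroDiag d ∧ d i = di ∧ x = uA wi ((M d).block i)}

/-- Non-obvious manipulability for ASHGs with arbitrary weights. -/
def NOM_A {n : ℕ} (M : (Fin n → Fin n → ℝ) → HGPartition n) : Prop :=
  ∀ (i : Fin n) (wi di : Fin n → ℝ), wi i = 0 → di i = 0 →
    sSup (utilSetA M i wi di) ≤ sSup (utilSetA M i wi wi) ∧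
    sInf (utilSetA M i wi di) ≤ sInf (utilSetA M i wi wi)

/-- A mechanism is optimal if it always outputs a social-welfare maximizing partition. -/
def OptimalA {n : ℕ} (M : (Fin n → Fin n → ℝ) → HGPartition n) : Prop :=
  ∀ d : Fin n → Fin n → ℝ, ZeroDiag d →
    ∀ π : HGPartition n, swA d π ≤ swA d (M d)

/-! If every agent other than `i` cares only about `i`, valuing her at `+L` when it belongs to a
target coalition `T` and at `-L` otherwise, then for `L` larger than the total spread of `i`'s
declared row the welfare-maximizing partitions put `i` together with exactly `T`. So an optimal
mechanism can give `i` any coalition whatever she declares: truth-telling reaches the best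
coalition for her true row (all agents she likes), and any declaration, truthful or not, can
leave her with the worst one (all agents she dislikes). Hence the sup is attained by the truthful
declaration and the inf is the same for every declaration. -/

section Sums

variable {ι G : Type*} [Fintype ι] [AddCommGroup G] [LinearOrder G] [IsOrderedAddMonoid G]

theorem sum_le_sum_filter_pos (f : ι → G) (C : Finset ι) :
    ∑ j ∈ C, f j ≤ ∑ j with 0 < f j, f j := by
  calc ∑ j ∈ C, f j
      = ∑ j ∈ C with 0 < f j, f j + ∑ j ∈ C with ¬0 < f j, f j :=
        (sum_filter_add_sum_filter_not C _ f).symm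
    _ ≤ ∑ j ∈ C with 0 < f j, f j + 0 := by
        gcongr
        exact sum_nonpos fun j hj => not_lt.mp (mem_filter.mp hj).2
    _ ≤ ∑ j with 0 < f j, f j := by
        rw [add_zero]
        refine sum_le_sum_of_subset_of_nonneg (filter_subset_filter _ (subset_univ C)) ?_
        exact fun j hj _ => (mem_filter.mp hj).2.le

theorem sum_filter_neg_le_sum (f : ι → G) (C : Finset ι) :
    ∑ j with f j < 0, f j ≤ ∑ j ∈ C, f j := by
  simpa only [Pi.neg_apply, neg_pos, sum_neg_distrib, neg_le_neg_iff] using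
    sum_le_sum_filter_pos (-f) C

end Sums

theorem sum_sign_le_card_sub_one {α R : Type*} [DecidableEq α] [CommRing R] [LinearOrder R]
    [IsStrictOrderedRing R] {S T : Finset α} (h : S ≠ T) :
    ∑ j ∈ S, (if j ∈ T then (1 : R) else -1) ≤ #T - 1 := by
  rw [sum_ite, sum_const, sum_const, smul_neg, nsmul_one, nsmul_one, ← sub_eq_add_neg]
  by_cases hST : S ⊆ T
  · have hlt : #(S.filter (· ∈ T)) < #T := by
      rw [filter_true_of_mem hST]
      exact card_lt_card (Finset.ssubset_iff_subset_ne.mpr ⟨hST, h⟩)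
    have : (#(S.filter (· ∈ T)) : R) + 1 ≤ #T := by exact_mod_cast hlt
    have : (0 : R) ≤ #(S.filter (· ∉ T)) := Nat.cast_nonneg _
    linarith
  · obtain ⟨j, hjS, hjT⟩ := not_subset.mp hST
    have hle : (#(S.filter (· ∈ T)) : R) ≤ #T :=
      Nat.cast_le.mpr (card_le_card fun k hk => (mem_filter.mp hk).2)
    have hpos : (1 : R) ≤ #(S.filter (· ∉ T)) :=
      Nat.one_le_cast.mpr (card_pos.mpr ⟨j, mem_filter.mpr ⟨hjS, hjT⟩⟩)
    linarith

namespace HGPartition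

variable {n : ℕ}

def ofCoalition (S : Finset (Fin n)) : HGPartition n where
  block j := if j ∈ S then S else {j}
  mem_block j := by by_cases h : j ∈ S <;> simp [h]
  block_eq a b hb := by
    by_cases ha : a ∈ S
    · simp only [ha, if_true] at hb ⊢
      simp [hb]
    · simp only [ha, if_false, mem_singleton] at hb
      rw [hb]

theorem ofCoalition_block_of_mem {S : Finset (Fin n)} {j : Fin n} (h : j ∈ S) :
    (ofCoalition S).block j = S :=
  if_pos h

end HGPartition

section StarProfile

variable {n : ℕ} (i : Fin n) (r s : Fin n → ℝ)

def starProfile : Fin n → Fin n → ℝ :=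
  fun j k => if j = i then r k else if k = i then s j else 0

theorem starProfile_self : starProfile i r s i = r := by
  funext k
  simp [starProfile]

variable {i r} in
theorem zeroDiag_starProfile (hr : r i = 0) : ZeroDiag (starProfile i r s) := by
  intro j
  by_cases hj : j = i <;> simp [starProfile, hj, hr]

theorem swA_starProfile (π : HGPartition n) :
    swA (starProfile i r s) π = uA r (π.block i) + ∑ j ∈ (π.block i).erase i, s j := by
  have hother : ∀ j ∈ univ.erase i, uA (starProfile i r s j) (π.block j)
      = if j ∈ π.block i then s j else 0 := by
    intro j hj
    have hji : j ≠ i := ne_of_mem_erase hj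
    simp only [uA, starProfile, hji, if_false, sum_ite_eq', π.mem_block_comm]
  rw [swA, ← add_sum_erase _ _ (mem_univ i), starProfile_self, sum_congr rfl hother,
    sum_ite_mem, erase_inter, univ_inter]

end StarProfile

section Mechanism

variable {n : ℕ} {M : (Fin n → Fin n → ℝ) → HGPartition n}

theorem OptimalA.exists_block_eq_insert (hM : OptimalA M) {i : Fin n} {r : Fin n → ℝ}
    (hr : r i = 0) {T : Finset (Fin n)} (hiT : i ∉ T) :
    ∃ d, ZeroDiag d ∧ d i = r ∧ (M d).block i = insert i T := by
  set L : ℝ := 1 + (∑ j with 0 < r j, r j - ∑ j with r j < 0, r j)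
  have hL : 1 ≤ L := by
    have : 0 ≤ ∑ j with 0 < r j, r j := sum_nonneg fun j hj => (mem_filter.mp hj).2.le
    have : ∑ j with r j < 0, r j ≤ 0 := sum_nonpos fun j hj => (mem_filter.mp hj).2.le
    linarith
  set s : Fin n → ℝ := fun j => L * if j ∈ T then 1 else -1
  set d := starProfile i r s
  have hd : ZeroDiag d := zeroDiag_starProfile s hr
  refine ⟨d, hd, starProfile_self i r s, ?_⟩
  set B := (M d).block i
  have hopt := hM d hd (.ofCoalition (insert i T))
  rw [swA_starProfile, swA_starProfile,
    HGPartition.ofCoalition_block_of_mem (mem_insert_self i T), erase_insert hiT] at hopt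
  suffices B.erase i = T by rw [← this, insert_erase ((M d).mem_block i)]
  by_contra hne
  have hT : ∑ j ∈ T, s j = L * #T := by
    rw [← mul_sum, sum_ite_of_true fun _ h => h, sum_const, nsmul_one]
  have hB : ∑ j ∈ B.erase i, s j ≤ L * #T - L := by
    rw [← mul_sum, ← mul_sub_one]
    exact mul_le_mul_of_nonneg_left (sum_sign_le_card_sub_one hne) (by linarith)
  have hupper := sum_le_sum_filter_pos r B
  have hlower := sum_filter_neg_le_sum r (insert i T)
  simp only [uA] at hopt
  linarith

theorem utilSetA_nonempty (i : Fin n) (wi : Fin n → ℝ) {r : Fin n → ℝ} (hr : r i = 0) :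
    (utilSetA M i wi r).Nonempty :=
  ⟨_, starProfile i r 0, zeroDiag_starProfile 0 hr, starProfile_self i r 0, rfl⟩

theorem utilSetA_subset_Icc (i : Fin n) (wi r : Fin n → ℝ) :
    utilSetA M i wi r ⊆ Set.Icc (∑ j with wi j < 0, wi j) (∑ j with 0 < wi j, wi j) := by
  rintro _ ⟨d, -, -, rfl⟩
  exact ⟨sum_filter_neg_le_sum wi _, sum_le_sum_filter_pos wi _⟩

theorem OptimalA.sum_mem_utilSetA (hM : OptimalA M) {i : Fin n} {wi r : Fin n → ℝ}
    (hwi : wi i = 0) (hr : r i = 0) {T : Finset (Fin n)} (hiT : i ∉ T) :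
    ∑ j ∈ T, wi j ∈ utilSetA M i wi r := by
  obtain ⟨d, hd, hdi, hblock⟩ := hM.exists_block_eq_insert hr hiT
  exact ⟨d, hd, hdi, by rw [hblock, uA, sum_insert hiT, hwi, zero_add]⟩

end Mechanism

theorem optimal_implies_NOM_ASHG (n : ℕ)
    (M : (Fin n → Fin n → ℝ) → HGPartition n) (hM : OptimalA M) :
    NOM_A M := by
  intro i wi di hwi hdi
  have hgreatest : IsGreatest (utilSetA M i wi wi) (∑ j with 0 < wi j, wi j) :=
    ⟨hM.sum_mem_utilSetA hwi hwi (by simp [hwi]),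
      fun _ hx => (utilSetA_subset_Icc i wi wi hx).2⟩
  have hleast : IsLeast (utilSetA M i wi di) (∑ j with wi j < 0, wi j) :=
    ⟨hM.sum_mem_utilSetA hwi hdi (by simp [hwi]),
      fun _ hx => (utilSetA_subset_Icc i wi di hx).1⟩
  constructor
  · rw [hgreatest.csSup_eq]
    exact csSup_le (utilSetA_nonempty i wi hdi) fun _ hx => (utilSetA_subset_Icc i wi di hx).2
  · rw [hleast.csInf_eq]
    exact le_csInf (utilSetA_nonempty i wi hwi) fun _ hx => (utilSetA_subset_Icc i wi wi hx).1
end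
end

section
/- For fractional hedonic games with arbitrary real weights (declaration domain D = all weight profiles), every optimal mechanism is non-obviously manipulable. -/
noncomputable section

open Finset

/-- The set of FHG utilities (w.r.t. true row `wi`) agent `i` can obtain under `M`
when declaring `di`, as the others' declarations range over the domain. -/
def utilSetF {n : ℕ} (M : (Fin n → Fin n → ℝ) → HGPartition n)
    (i : Fin n) (wi di : Fin n → ℝ) : Set ℝ :=
  {x : ℝ | ∃ d : Fin n → Fin n → ℝ, ZeroDiag d ∧ d i = di ∧ x = uF wi ((M d).block i)}

/-- Non-obvious manipulability for FHGs with arbitrary weights. -/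
def NOM_F {n : ℕ} (M : (Fin n → Fin n → ℝ) → HGPartition n) : Prop :=
  ∀ (i : Fin n) (wi di : Fin n → ℝ), wi i = 0 → di i = 0 →
    sSup (utilSetF M i wi di) ≤ sSup (utilSetF M i wi wi) ∧
    sInf (utilSetF M i wi di) ≤ sInf (utilSetF M i wi wi)

/-- A mechanism is optimal if it always outputs a social-welfare maximizing partition. -/
def OptimalF {n : ℕ} (M : (Fin n → Fin n → ℝ) → HGPartition n) : Prop :=
  ∀ d : Fin n → Fin n → ℝ, ZeroDiag d →
    ∀ π : HGPartition n, swF d π ≤ swF d (M d)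

/-- the partition with block `C` and singletons elsewhere -/
def stdPart {n : ℕ} (C : Finset (Fin n)) : HGPartition n where
  block j := if j ∈ C then C else {j}
  mem_block j := by by_cases hj : j ∈ C <;> simp [hj]
  block_eq := by
    intro j k hk
    by_cases hj : j ∈ C
    · simp only [if_pos hj] at hk
      simp [hk, hj]
    · simp only [if_neg hj, Finset.mem_singleton] at hk
      simp [hk]

lemma sum_helper {n : ℕ} (i : Fin n) (C : Finset (Fin n)) (hiC : i ∈ C) (A Bv : ℝ) :
    ∑ j : Fin n, (if j = i then A else if j ∈ C then Bv else 0)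
      = A + ((C.card : ℝ) - 1) * Bv := by
  classical
  rw [← Finset.sum_add_sum_compl C]
  have h1 : ∑ j ∈ Cᶜ, (if j = i then A else if j ∈ C then Bv else 0) = 0 := by
    refine Finset.sum_eq_zero fun j hj => ?_
    rw [Finset.mem_compl] at hj
    have hji : j ≠ i := fun h => hj (h ▸ hiC)
    simp [hji, hj]
  have h2 : ∑ j ∈ C, (if j = i then A else if j ∈ C then Bv else 0)
      = A + ((C.card : ℝ) - 1) * Bv := by
    rw [← Finset.add_sum_erase _ _ hiC, if_pos rfl]
    congr 1
    rw [Finset.sum_congr rfl (fun j hj => ?_), Finset.sum_const,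
      Finset.card_erase_of_mem hiC, nsmul_eq_mul]
    · congr 1
      have hc1 : 1 ≤ C.card := Finset.card_pos.mpr ⟨i, hiC⟩
      push_cast [Nat.cast_sub hc1]
      ring
    · rw [Finset.mem_erase] at hj
      simp [hj.1, hj.2]
  rw [h1, h2, add_zero]

lemma ratio_key (a b c N : ℕ) (ha : 1 ≤ a) (hab : a ≤ b) (hac : a ≤ c)
    (hbN : b ≤ N) (hcN : c ≤ N) (hc2 : 2 ≤ c) (h : a < b ∨ a < c) :
    ((a:ℝ) - 1)/b ≤ ((c:ℝ)-1)/c - 1/(N:ℝ)^2 := by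
  have hb1 : 1 ≤ b := ha.trans hab
  have hb0 : (0:ℝ) < b := by exact_mod_cast hb1
  have hc0 : (0:ℝ) < c := by positivity
  have hN1 : 1 ≤ N := hb1.trans hbN
  have hN0 : (0:ℝ) < N := by exact_mod_cast hN1
  have hA : (1:ℝ) ≤ a := by exact_mod_cast ha
  have hAB : (a:ℝ) ≤ b := by exact_mod_cast hab
  have hAC : (a:ℝ) ≤ c := by exact_mod_cast hac
  have hBN : (b:ℝ) ≤ N := by exact_mod_cast hbN
  have hCN : (c:ℝ) ≤ N := by exact_mod_cast hcN
  have hC2 : (2:ℝ) ≤ c := by exact_mod_cast hc2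
  have hcb : (c:ℝ)*b ≤ N^2 := by nlinarith [mul_le_mul hCN hBN hb0.le hN0.le]
  have key : ((a:ℝ)-1)*(c*N^2) + c*b ≤ ((c:ℝ)-1)*N^2*b := by
    rcases lt_or_eq_of_le hac with h' | h'
    · have hAC' : (a:ℝ) + 1 ≤ c := by exact_mod_cast h'
      have h1 : ((c:ℝ)-1)*N^2*a ≤ ((c:ℝ)-1)*N^2*b :=
        mul_le_mul_of_nonneg_left hAB (by nlinarith)
      have h3 : (N:ℝ)^2*(a+1) ≤ N^2*c := mul_le_mul_of_nonneg_left hAC' (by positivity)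
      nlinarith [h1, h3, hcb]
    · have hbb : a < b := by omega
      have hAB' : (a:ℝ) + 1 ≤ b := by exact_mod_cast hbb
      have h1 : ((c:ℝ)-1)*N^2*(a+1) ≤ ((c:ℝ)-1)*N^2*b :=
        mul_le_mul_of_nonneg_left hAB' (by nlinarith)
      have h2 : (a:ℝ) = c := by exact_mod_cast h'
      nlinarith [h1, hcb, sq_nonneg (N:ℝ)]
  have h2 : ((a:ℝ)-1)/b ≤ (((c:ℝ)-1)*N^2 - c)/(c*N^2) := by
    rw [div_le_div_iff₀ hb0 (by positivity)]
    nlinarith [key]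
  refine h2.trans_eq ?_
  field_simp
  try ring

lemma force {n : ℕ} (M : (Fin n → Fin n → ℝ) → HGPartition n) (hM : OptimalF M)
    (i : Fin n) (di : Fin n → ℝ) (hdi : di i = 0)
    (C : Finset (Fin n)) (hiC : i ∈ C) :
    ∃ d, ZeroDiag d ∧ d i = di ∧ (M d).block i = C := by
  classical
  have hn : 0 < n := i.pos
  have hnR : (0:ℝ) < n := by exact_mod_cast hn
  set S₁ : ℝ := ∑ k, |di k| with hS₁def
  have hS₁0 : 0 ≤ S₁ := Finset.sum_nonneg fun k _ => abs_nonneg _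
  set K : ℝ := 2*(n:ℝ)^2*(S₁+1) with hKdef
  have hK0 : 0 < K := by nlinarith
  obtain ⟨d, hddef⟩ : ∃ d : Fin n → Fin n → ℝ, d = fun j k =>
      if j = i then di k
      else if j ∈ C ∧ k ∈ C ∧ j ≠ k then K
      else if j ∉ C ∧ k = i then -K else 0 := ⟨_, rfl⟩
  have hdirow : d i = di := by funext k; simp [hddef]
  have hZD : ZeroDiag d := by
    intro j
    by_cases hj : j = i
    · subst hj; simp [hddef, hdi]
    · simp [hddef, hj]
  -- row sums
  have rowC : ∀ j, j ≠ i → j ∈ C → ∀ B : Finset (Fin n), j ∈ B →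
      ∑ k ∈ B, d j k = K * (((B ∩ C).card : ℝ) - 1) := by
    intro j hji hjC B hjB
    have hrow : ∀ k, d j k = if k ∈ C ∧ j ≠ k then K else 0 := by
      intro k
      by_cases hk : k ∈ C ∧ j ≠ k
      · simp [hddef, hji, hjC, hk]
      · simp only [hddef]
        rw [if_neg hji, if_neg (by tauto), if_neg (by tauto), if_neg hk]
    calc ∑ k ∈ B, d j k = ∑ k ∈ B, (if k ∈ C ∧ j ≠ k then K else 0) := by
          exact Finset.sum_congr rfl fun k _ => hrow k
      _ = ∑ k ∈ B.filter (fun k => k ∈ C ∧ j ≠ k), K := (Finset.sum_filter _ _).symm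
      _ = ((B ∩ C).erase j).card • K := by
          have hset : B.filter (fun k => k ∈ C ∧ j ≠ k) = (B ∩ C).erase j := by
            ext k
            simp only [Finset.mem_filter, Finset.mem_erase, Finset.mem_inter]
            tauto
          rw [hset, Finset.sum_const]
      _ = K * (((B ∩ C).card : ℝ) - 1) := by
          rw [Finset.card_erase_of_mem (by simp [hjB, hjC]), nsmul_eq_mul]
          have h1 : 1 ≤ (B ∩ C).card := Finset.card_pos.mpr ⟨j, by simp [hjB, hjC]⟩
          push_cast [Nat.cast_sub h1]
          ring
  have rowOut : ∀ j, j ∉ C → ∀ B : Finset (Fin n),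
      ∑ k ∈ B, d j k = if i ∈ B then -K else 0 := by
    intro j hjC B
    have hji : j ≠ i := fun h => hjC (h ▸ hiC)
    have hrow : ∀ k, d j k = if k = i then -K else 0 := by
      intro k
      by_cases hk : k = i
      · simp [hddef, hji, hjC, hk]
      · simp only [hddef]
        rw [if_neg hji, if_neg (by tauto), if_neg (by tauto), if_neg hk]
    rw [Finset.sum_congr rfl fun k _ => hrow k]
    exact Finset.sum_ite_eq' B i fun _ => -K
  -- welfare of the standard partition
  set cR : ℝ := (C.card : ℝ) with hcRdef
  have hc1 : 1 ≤ C.card := Finset.card_pos.mpr ⟨i, hiC⟩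
  have hcR1 : (1:ℝ) ≤ cR := by rw [hcRdef]; exact_mod_cast hc1
  have hcR0 : (0:ℝ) < cR := by linarith
  set S : ℝ := ∑ k ∈ C, di k with hSdef
  have hSabs : |S| ≤ S₁ := by
    calc |S| ≤ ∑ k ∈ C, |di k| := Finset.abs_sum_le_sum_abs _ _
      _ ≤ S₁ := Finset.sum_le_sum_of_subset_of_nonneg (Finset.subset_univ C)
          (fun k _ _ => abs_nonneg _)
  have hπ₀ : swF d (stdPart C) = S / cR + (cR - 1) * (K * (cR - 1) / cR) := by
    unfold swF
    have hval : ∀ j : Fin n, uF (d j) ((stdPart C).block j) =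
        if j = i then S / cR else if j ∈ C then K * (cR - 1) / cR else 0 := by
      intro j
      by_cases hj : j = i
      · subst hj
        have hb : (stdPart C).block j = C := by simp [stdPart, hiC]
        rw [hb, if_pos rfl]
        simp only [uF, hdirow]
        rfl
      · by_cases hjC : j ∈ C
        · have hb : (stdPart C).block j = C := by simp [stdPart, hjC]
          rw [hb, if_neg hj, if_pos hjC]
          simp only [uF]
          rw [rowC j hj hjC C hjC, Finset.inter_self]
        · have hb : (stdPart C).block j = {j} := by simp [stdPart, hjC]
          rw [hb, if_neg hj, if_neg hjC]
          simp [uF, hZD j]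
    rw [Finset.sum_congr rfl fun j _ => hval j, sum_helper i C hiC]
  -- strict domination
  have hlt : ∀ π : HGPartition n, π.block i ≠ C → swF d π < swF d (stdPart C) := by
    intro π hne
    have hBi : i ∈ π.block i := π.mem_block i
    -- bound for agent i
    have hui : uF di (π.block i) ≤ S₁ := by
      have hb1 : 1 ≤ (π.block i).card := Finset.card_pos.mpr ⟨i, hBi⟩
      have hb0 : (0:ℝ) < ((π.block i).card : ℝ) := by exact_mod_cast hb1
      have hsum : ∑ k ∈ π.block i, di k ≤ S₁ := by
        calc ∑ k ∈ π.block i, di k ≤ ∑ k ∈ π.block i, |di k| :=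
              Finset.sum_le_sum fun k _ => le_abs_self _
          _ ≤ S₁ := Finset.sum_le_sum_of_subset_of_nonneg (Finset.subset_univ _)
              (fun k _ _ => abs_nonneg _)
      rw [uF, div_le_iff₀ hb0]
      have hb1' : (1:ℝ) ≤ ((π.block i).card : ℝ) := by exact_mod_cast hb1
      nlinarith
    -- bound for outside agents
    have huOut : ∀ j, j ∉ C → uF (d j) (π.block j) ≤ 0 := by
      intro j hjC
      rw [uF, rowOut j hjC]
      apply div_nonpos_of_nonpos_of_nonneg
      · split <;> linarith
      · positivity
    by_cases hcase : 2 ≤ C.card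
    · -- C has at least two members
      have hcR2 : (2:ℝ) ≤ cR := by rw [hcRdef]; exact_mod_cast hcase
      have hbnd : ∀ j : Fin n, uF (d j) (π.block j) ≤
          (if j = i then S₁ else if j ∈ C then K * (cR - 1) / cR - K / (n:ℝ)^2 else 0) := by
        intro j
        by_cases hj : j = i
        · subst hj; rw [if_pos rfl, hdirow]; exact hui
        · rw [if_neg hj]
          by_cases hjC : j ∈ C
          · rw [if_pos hjC]
            have hjB : j ∈ π.block j := π.mem_block j
            have hBjC : π.block j ≠ C := by
              intro h
              exact hne (π.block_eq j i (h ▸ hiC) ▸ h)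
            set a := (π.block j ∩ C).card
            set b := (π.block j).card
            have ha : 1 ≤ a := Finset.card_pos.mpr ⟨j, by simp [hjB, hjC]⟩
            have hab : a ≤ b := Finset.card_le_card Finset.inter_subset_left
            have hac : a ≤ C.card := Finset.card_le_card Finset.inter_subset_right
            have hbN : b ≤ n := by
              simpa using Finset.card_le_univ (π.block j)
            have hcN : C.card ≤ n := by simpa using Finset.card_le_univ C
            have hor : a < b ∨ a < C.card := by
              by_contra hcon
              push_neg at hcon
              have h1 : π.block j ∩ C = π.block j :=
                Finset.eq_of_subset_of_card_le Finset.inter_subset_left hcon.1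
              have h2 : π.block j ∩ C = C :=
                Finset.eq_of_subset_of_card_le Finset.inter_subset_right hcon.2
              exact hBjC (h1.symm.trans h2)
            have hratio := ratio_key a b C.card n ha hab hac hbN hcN hcase hor
            have hb0 : (0:ℝ) < (b:ℝ) := by
              exact_mod_cast Nat.lt_of_lt_of_le ha hab
            rw [uF, rowC j hj hjC _ hjB, mul_div_assoc]
            calc K * (((a:ℝ) - 1) / b) ≤ K * ((cR - 1)/cR - 1/(n:ℝ)^2) :=
                  mul_le_mul_of_nonneg_left hratio hK0.le
              _ = K * (cR - 1) / cR - K / (n:ℝ)^2 := by ring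
          · rw [if_neg hjC]; exact huOut j hjC
      have hsum := Finset.sum_le_sum fun j (_ : j ∈ Finset.univ) => hbnd j
      rw [sum_helper i C hiC] at hsum
      have hswbound : swF d π ≤ S₁ + (cR - 1) * (K * (cR - 1) / cR - K / (n:ℝ)^2) := hsum
      rw [hπ₀]
      have hKn2 : K / (n:ℝ)^2 = 2*(S₁+1) := by
        rw [hKdef]; field_simp
      have hScR : -S₁ ≤ S / cR := by
        rw [le_div_iff₀ hcR0]
        nlinarith [abs_le.mp hSabs]
      have hfin : S₁ + (cR - 1) * (K * (cR - 1) / cR - K / (n:ℝ)^2)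
          < S / cR + (cR - 1) * (K * (cR - 1) / cR) := by
        have hexp : (cR - 1) * (K * (cR - 1) / cR - K / (n:ℝ)^2)
            = (cR - 1) * (K * (cR - 1) / cR) - (cR - 1) * (K/(n:ℝ)^2) := by ring
        rw [hexp, hKn2]
        have h1 : 1 * (2*(S₁+1)) ≤ (cR - 1) * (2*(S₁+1)) :=
          mul_le_mul_of_nonneg_right (by linarith) (by linarith)
        linarith
      calc swF d π ≤ _ := hswbound
        _ < _ := hfin
    · -- C = {i}
      have hc1' : C.card = 1 := by omega
      have hCi : C = {i} := by
        rw [Finset.card_eq_one] at hc1'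
        obtain ⟨a, ha⟩ := hc1'
        rw [ha] at hiC ⊢
        rw [Finset.mem_singleton] at hiC
        rw [hiC]
      -- π.block i ≠ {i}, find another member j₀
      obtain ⟨j₀, hj₀B, hj₀i⟩ : ∃ j₀ ∈ π.block i, j₀ ≠ i := by
        by_contra hcon
        push_neg at hcon
        apply hne
        rw [hCi]
        ext k
        simp only [Finset.mem_singleton]
        constructor
        · exact fun hk => hcon k hk
        · rintro rfl; exact hBi
      have hj₀C : j₀ ∉ C := by rw [hCi]; simpa using hj₀i
      have hBj₀ : π.block j₀ = π.block i := π.block_eq i j₀ hj₀B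
      have hbig : 1 ≤ (π.block i).card := Finset.card_pos.mpr ⟨i, hBi⟩
      have hbn : (π.block i).card ≤ n := by simpa using Finset.card_le_univ (π.block i)
      have huj₀ : uF (d j₀) (π.block j₀) ≤ -(K / (n:ℝ)) := by
        rw [uF, hBj₀, rowOut j₀ hj₀C, if_pos hBi]
        have hb0 : (0:ℝ) < ((π.block i).card : ℝ) := by exact_mod_cast hbig
        have hbnR : ((π.block i).card : ℝ) ≤ n := by exact_mod_cast hbn
        rw [neg_div, neg_le_neg_iff]
        exact div_le_div_of_nonneg_left hK0.le hb0 hbnR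
      have hbnd : ∀ j : Fin n, uF (d j) (π.block j) ≤
          (if j = i then S₁ else 0) + (if j = j₀ then -(K / (n:ℝ)) else 0) := by
        intro j
        by_cases hj : j = i
        · subst hj
          rw [if_pos rfl, if_neg (Ne.symm hj₀i), hdirow, add_zero]
          exact hui
        · rw [if_neg hj]
          by_cases hj' : j = j₀
          · subst hj'; rw [if_pos rfl, zero_add]; exact huj₀
          · rw [if_neg hj', add_zero]
            exact huOut j (by rw [hCi]; simpa using hj)
      have hsum := Finset.sum_le_sum fun j (_ : j ∈ Finset.univ) => hbnd j
      rw [Finset.sum_add_distrib, Finset.sum_ite_eq' Finset.univ i,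
        Finset.sum_ite_eq' Finset.univ j₀] at hsum
      simp only [Finset.mem_univ, if_pos] at hsum
      have hswbound : swF d π ≤ S₁ + -(K / (n:ℝ)) := hsum
      have hπ₀' : swF d (stdPart C) = 0 := by
        rw [hπ₀, hSdef, hcRdef, hCi]
        simp [hdi]
      rw [hπ₀']
      have hKn : K / (n:ℝ) = 2*(n:ℝ)*(S₁+1) := by
        rw [hKdef]; field_simp
      have hn1 : (1:ℝ) ≤ n := by exact_mod_cast hn
      calc swF d π ≤ S₁ + -(K / (n:ℝ)) := hswbound
        _ < 0 := by rw [hKn]; nlinarith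
  refine ⟨d, hZD, hdirow, ?_⟩
  by_contra hneq
  exact absurd (hM d hZD (stdPart C)) (not_le.mpr (hlt (M d) hneq))

lemma utilSet_eq {n : ℕ} (M : (Fin n → Fin n → ℝ) → HGPartition n) (hM : OptimalF M)
    (i : Fin n) (wi di : Fin n → ℝ) (hdi : di i = 0) :
    utilSetF M i wi di = {x : ℝ | ∃ C : Finset (Fin n), i ∈ C ∧ x = uF wi C} := by
  ext x
  constructor
  · rintro ⟨d, _, _, rfl⟩
    exact ⟨(M d).block i, (M d).mem_block i, rfl⟩
  · rintro ⟨C, hiC, rfl⟩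
    obtain ⟨d, hZD, hdirow, hblock⟩ := force M hM i di hdi C hiC
    exact ⟨d, hZD, hdirow, by rw [hblock]⟩

theorem optimal_implies_NOM_FHG (n : ℕ)
    (M : (Fin n → Fin n → ℝ) → HGPartition n) (hM : OptimalF M) :
    NOM_F M := by
  intro i wi di hwi hdi
  rw [utilSet_eq M hM i wi di hdi, utilSet_eq M hM i wi wi hwi]
  exact ⟨le_rfl, le_rfl⟩
end
end

section
/- For additively separable hedonic games with arbitrary real weights (declaration domain D = all weight profiles), every scale-independent mechanism is non-obviously manipulable. -/
noncomputable section

open Finset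

/-- Two weight profiles are proportional if their flattened (mutual-sum) weights are
positive multiples of each other. -/
def Proportional {n : ℕ} (w w' : Fin n → Fin n → ℝ) : Prop :=
  ∃ lam : ℝ, 0 < lam ∧ ∀ i j, i ≠ j → w i j + w j i = lam * (w' i j + w' j i)

/-- Scale-independence on the domain of all (zero-diagonal) weight profiles. -/
def SI_arb {n : ℕ} (M : (Fin n → Fin n → ℝ) → HGPartition n) : Prop :=
  ∀ d d' : Fin n → Fin n → ℝ, ZeroDiag d → ZeroDiag d' →
    Proportional d d' → M d = M d'

/-!
Under scale-independence the outcome depends only on the flattened weights `d i j + d j i`.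
Whatever agent `i` declares, the other agents can adjust their scores towards `i` so that every
flattened weight is unchanged. Hence the set of outcomes agent `i` can face is the same for every
declaration, and so are its supremum and infimum.
-/

section

variable {n : ℕ}

def redeclareRow (d : Fin n → Fin n → ℝ) (i : Fin n) (b : Fin n → ℝ) : Fin n → Fin n → ℝ :=
  fun j k => if j = i then b k else if k = i then d j i + d i j - b j else d j k

@[simp]
lemma redeclareRow_self (d : Fin n → Fin n → ℝ) (i : Fin n) (b : Fin n → ℝ) :
    redeclareRow d i b i = b := by
  funext k
  simp [redeclareRow]

lemma ZeroDiag.redeclareRow {d : Fin n → Fin n → ℝ} (hd : ZeroDiag d) {i : Fin n}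
    {b : Fin n → ℝ} (hb : b i = 0) : ZeroDiag (redeclareRow d i b) := by
  intro j
  by_cases hj : j = i
  · simp [_root_.redeclareRow, hj, hb]
  · simp [_root_.redeclareRow, hj, hd j]

lemma proportional_redeclareRow (d : Fin n → Fin n → ℝ) (i : Fin n) (b : Fin n → ℝ) :
    Proportional d (redeclareRow d i b) := by
  refine ⟨1, one_pos, fun j k hjk => ?_⟩
  by_cases hj : j = i
  · subst hj
    simp [redeclareRow, Ne.symm hjk, add_comm]
  · by_cases hk : k = i
    · subst hk
      simp [redeclareRow, hj]
    · simp [redeclareRow, hj, hk]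

lemma SI_arb.utilSetA_subset {M : (Fin n → Fin n → ℝ) → HGPartition n} (hM : SI_arb M)
    {i : Fin n} (wi a : Fin n → ℝ) {b : Fin n → ℝ} (hb : b i = 0) :
    utilSetA M i wi a ⊆ utilSetA M i wi b := by
  rintro x ⟨d, hd, -, rfl⟩
  have hd' := hd.redeclareRow hb
  refine ⟨redeclareRow d i b, hd', redeclareRow_self d i b, ?_⟩
  rw [hM d _ hd hd' (proportional_redeclareRow d i b)]

lemma SI_arb.utilSetA_eq {M : (Fin n → Fin n → ℝ) → HGPartition n} (hM : SI_arb M)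
    {i : Fin n} (wi : Fin n → ℝ) {a b : Fin n → ℝ} (ha : a i = 0) (hb : b i = 0) :
    utilSetA M i wi a = utilSetA M i wi b :=
  (hM.utilSetA_subset wi a hb).antisymm (hM.utilSetA_subset wi b ha)

end

theorem SI_implies_NOM_ASHG_arbitrary (n : ℕ)
    (M : (Fin n → Fin n → ℝ) → HGPartition n) (hM : SI_arb M) :
    NOM_A M := by
  intro i wi di hwi hdi
  rw [hM.utilSetA_eq wi hdi hwi]
  exact ⟨le_rfl, le_rfl⟩
end
end

section
/- Let w be a weight profile on n agents, let ŵ(i,j) = w_ij + w_ji be the flattened weights, and let M* be a matching on the agents maximizing Σ_{{i,j}∈M} ŵ(i,j) over all matchings. Let π be the partition whose blocks are the pairs of M* together with singletons for unmatched agents. Then the optimal fractional hedonic game social welfare satisfies opt_w ≤ 2 · SW_w(π), where SW_w(π) equals half the value of M*. -/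
noncomputable section

open Finset

/-- A matching on the agents: a set of (ordered representatives of) pairwise disjoint
unordered pairs of distinct agents. -/
def IsMatching {n : ℕ} (m : Finset (Fin n × Fin n)) : Prop :=
  (∀ p ∈ m, p.1 ≠ p.2) ∧
    ∀ p ∈ m, ∀ q ∈ m, p ≠ q →
      p.1 ≠ q.1 ∧ p.1 ≠ q.2 ∧ p.2 ≠ q.1 ∧ p.2 ≠ q.2

/-- The value of a matching: the sum of the flattened weights `ŵ(i,j) = w i j + w j i`
over its pairs. -/
def matchValue {n : ℕ} (w : Fin n → Fin n → ℝ) (m : Finset (Fin n × Fin n)) : ℝ :=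
  ∑ p ∈ m, (w p.1 p.2 + w p.2 p.1)

/-- `π` is the partition whose blocks are the pairs of the matching `m`,
together with singletons for the unmatched agents. -/
def InducedByMatching {n : ℕ} (m : Finset (Fin n × Fin n)) (π : HGPartition n) : Prop :=
  (∀ p ∈ m, π.block p.1 = {p.1, p.2}) ∧
    ∀ i : Fin n, (∀ p ∈ m, i ≠ p.1 ∧ i ≠ p.2) → π.block i = {i}

/-!
Each coalition `C` of a partition contributes `(∑ i ∈ C, ∑ j ∈ C, w i j) / #C` to the welfare.
Numbering `C` by `f : C → Fin #C` and colouring the edge `{i, j}` of the complete graph on `C`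
by `f i + f j` splits its edges into `#C` matchings (a colour and one endpoint determine the
other), so one of them has value at least the average `(∑ i ∈ C, ∑ j ∈ C, w i j) / #C`. The
union of these matchings over the coalitions of `π'` is a matching of value at least `SW(π')`,
hence `SW(π') ≤ ŵ(M*) = 2 SW(π)`; the last equality holds because each member of a pair
`{i, j}` gets `w i j / 2` (resp. `w j i / 2`) and singletons get `0`.
-/

theorem Finset.sum_product_eq_sum_filter_lt {α M : Type*} [LinearOrder α] [AddCommMonoid M]
    (s : Finset α) (g : α → α → M) (hg : ∀ a, g a a = 0) :
    ∑ p ∈ s ×ˢ s, g p.1 p.2 = ∑ p ∈ s ×ˢ s with p.1 < p.2, (g p.1 p.2 + g p.2 p.1) := by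
  have hswap : ∑ p ∈ s ×ˢ s with p.1 < p.2, g p.2 p.1 = ∑ p ∈ s ×ˢ s with p.2 < p.1, g p.1 p.2 :=
    sum_equiv (Equiv.prodComm α α) (by simp [and_comm]) (by simp)
  have hdiag : ∑ p ∈ s ×ˢ s with ¬ p.1 < p.2 ∧ ¬ p.2 < p.1, g p.1 p.2 = 0 :=
    sum_eq_zero fun p hp => by
      obtain ⟨-, h₁, h₂⟩ := mem_filter.1 hp
      rw [le_antisymm (not_lt.1 h₂) (not_lt.1 h₁), hg]
  rw [sum_add_distrib, hswap, ← sum_filter_add_sum_filter_not _ (fun p => p.1 < p.2),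
    ← sum_filter_add_sum_filter_not {p ∈ s ×ˢ s | ¬ p.1 < p.2} (fun p => p.2 < p.1),
    filter_filter, filter_filter, hdiag, add_zero]
  congr 2
  ext p
  simp only [mem_filter]
  exact ⟨fun h => ⟨h.1, h.2.2⟩, fun h => ⟨h.1, h.2.not_gt, h.2⟩⟩

namespace HGPartition

variable {n : ℕ} (π : HGPartition n)

def blocks : Finset (Finset (Fin n)) := univ.image π.block

lemma mem_iff_block_eq {C : Finset (Fin n)} (hC : C ∈ π.blocks) {i : Fin n} :
    i ∈ C ↔ π.block i = C := by
  obtain ⟨j, -, rfl⟩ := mem_image.1 hC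
  exact ⟨π.block_eq j i, fun h => h ▸ π.mem_block i⟩

lemma pairwiseDisjoint_blocks : (π.blocks : Set (Finset (Fin n))).PairwiseDisjoint id :=
  fun _ hC _ hC' hne => disjoint_left.2 fun _ hi hi' =>
    hne (((π.mem_iff_block_eq hC).1 hi).symm.trans ((π.mem_iff_block_eq hC').1 hi'))

lemma swF_eq_sum_blocks (w : Fin n → Fin n → ℝ) :
    swF w π = ∑ C ∈ π.blocks, ∑ i ∈ C, uF (w i) C := by
  rw [swF, ← sum_fiberwise_of_maps_to (fun i _ => mem_image_of_mem π.block (mem_univ i))]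
  refine sum_congr rfl fun C hC => ?_
  have hfiber : ({i | π.block i = C} : Finset (Fin n)) = C := by
    ext i; simp [π.mem_iff_block_eq hC]
  rw [hfiber]
  exact sum_congr rfl fun i hi => by rw [(π.mem_iff_block_eq hC).1 hi]

end HGPartition

section Matching

variable {n : ℕ}

lemma IsMatching.pairwiseDisjoint {m : Finset (Fin n × Fin n)} (hm : IsMatching m) :
    (m : Set (Fin n × Fin n)).PairwiseDisjoint fun p => ({p.1, p.2} : Finset (Fin n)) := by
  intro p hp q hq hpq
  have := hm.2 p hp q hq hpq
  simp only [Function.onFun, disjoint_insert_left, disjoint_insert_right, disjoint_singleton,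
    mem_insert, mem_singleton]
  tauto

lemma IsMatching.biUnion {ι : Type*} {s : Finset ι} {V : ι → Finset (Fin n)}
    {M : ι → Finset (Fin n × Fin n)} (hV : (s : Set ι).PairwiseDisjoint V)
    (hM : ∀ i ∈ s, IsMatching (M i)) (hMV : ∀ i ∈ s, M i ⊆ V i ×ˢ V i) :
    IsMatching (s.biUnion M) := by
  refine ⟨fun p hp => ?_, fun p hp q hq hpq => ?_⟩
  · obtain ⟨i, hi, hpi⟩ := mem_biUnion.1 hp
    exact (hM i hi).1 p hpi
  obtain ⟨i, hi, hpi⟩ := mem_biUnion.1 hp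
  obtain ⟨j, hj, hqj⟩ := mem_biUnion.1 hq
  by_cases hij : i = j
  · subst hij
    exact (hM i hi).2 p hpi q hqj hpq
  have hne : ∀ a ∈ V i, ∀ b ∈ V j, a ≠ b := fun a ha b hb hab =>
    disjoint_left.1 (hV hi hj hij) ha (hab ▸ hb)
  obtain ⟨hp₁, hp₂⟩ := mem_product.1 (hMV i hi hpi)
  obtain ⟨hq₁, hq₂⟩ := mem_product.1 (hMV j hj hqj)
  exact ⟨hne _ hp₁ _ hq₁, hne _ hp₁ _ hq₂, hne _ hp₂ _ hq₁, hne _ hp₂ _ hq₂⟩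

lemma matchValue_biUnion (w : Fin n → Fin n → ℝ) {ι : Type*} {s : Finset ι}
    {V : ι → Finset (Fin n)} {M : ι → Finset (Fin n × Fin n)}
    (hV : (s : Set ι).PairwiseDisjoint V) (hMV : ∀ i ∈ s, M i ⊆ V i ×ˢ V i) :
    matchValue w (s.biUnion M) = ∑ i ∈ s, matchValue w (M i) :=
  sum_biUnion fun i hi j hj hij => disjoint_of_subset_left (hMV i hi) <|
    disjoint_of_subset_right (hMV j hj) (disjoint_product.2 (Or.inl (hV hi hj hij)))

lemma swF_eq_matchValue_div_two {w : Fin n → Fin n → ℝ} (hw : ZeroDiag w)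
    {m : Finset (Fin n × Fin n)} (hm : IsMatching m) {π : HGPartition n}
    (hπ : InducedByMatching m π) :
    swF w π = matchValue w m / 2 := by
  set S := m.biUnion fun p => ({p.1, p.2} : Finset (Fin n))
  have hunmatched : ∀ i ∉ S, uF (w i) (π.block i) = 0 := by
    intro i hi
    simp only [S, mem_biUnion, mem_insert, mem_singleton, not_exists, not_and, not_or] at hi
    simp [hπ.2 i hi, uF, hw i]
  have hpair : ∀ p ∈ m,
      ∑ i ∈ {p.1, p.2}, uF (w i) (π.block i) = (w p.1 p.2 + w p.2 p.1) / 2 := by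
    intro p hp
    have hne := hm.1 p hp
    have hb₁ := hπ.1 p hp
    have hb₂ : π.block p.2 = {p.1, p.2} := (π.block_eq p.1 p.2 (by simp [hb₁])).trans hb₁
    rw [sum_pair hne, hb₁, hb₂, uF, uF, sum_pair hne, sum_pair hne, card_pair hne, hw, hw]
    push_cast
    ring
  rw [swF, ← sum_subset (subset_univ S) fun i _ hi => hunmatched i hi,
    sum_biUnion hm.pairwiseDisjoint, matchValue, sum_div]
  exact sum_congr rfl hpair

variable {k : ℕ}

/-- A colour class of the proper edge colouring `{i, j} ↦ f i + f j` of the complete graph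
on `C`. -/
def colorClass (C : Finset (Fin n)) (f : Fin n → Fin k) (t : Fin k) : Finset (Fin n × Fin n) :=
  {p ∈ C ×ˢ C | p.1 < p.2 ∧ f p.1 + f p.2 = t}

lemma isMatching_colorClass {C : Finset (Fin n)} {f : Fin n → Fin k} (hf : Set.InjOn f C)
    (t : Fin k) : IsMatching (colorClass C f t) := by
  have hmem : ∀ p ∈ colorClass C f t, p.1 ∈ C ∧ p.2 ∈ C ∧ p.1 < p.2 ∧ f p.1 + f p.2 = t := by
    intro p hp
    simpa [colorClass, and_assoc] using hp
  refine ⟨fun p hp => (hmem p hp).2.2.1.ne, fun p hp q hq hpq => ?_⟩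
  obtain ⟨hp₁, hp₂, hp, hpt⟩ := hmem p hp
  obtain ⟨hq₁, hq₂, hq, hqt⟩ := hmem q hq
  have hsum : f p.1 + f p.2 = f q.1 + f q.2 := hpt.trans hqt.symm
  refine ⟨fun h => ?_, fun h => ?_, fun h => ?_, fun h => ?_⟩
  · rw [h] at hsum
    exact hpq (Prod.ext h (hf hp₂ hq₂ (add_left_cancel hsum)))
  · rw [h, add_comm (f q.1)] at hsum
    have := hf hp₂ hq₁ (add_left_cancel hsum)
    exact lt_asymm (hp.trans_eq this) (h ▸ hq)
  · rw [h, add_comm (f q.1)] at hsum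
    have := hf hp₁ hq₂ (add_right_cancel hsum)
    exact lt_asymm (h ▸ hp) (hq.trans_eq this.symm)
  · rw [h] at hsum
    exact hpq (Prod.ext (hf hp₁ hq₁ (add_right_cancel hsum)) h)

lemma sum_matchValue_colorClass (w : Fin n → Fin n → ℝ) (C : Finset (Fin n))
    (f : Fin n → Fin k) :
    ∑ t, matchValue w (colorClass C f t) =
      ∑ p ∈ C ×ˢ C with p.1 < p.2, (w p.1 p.2 + w p.2 p.1) := by
  rw [← sum_fiberwise {p ∈ C ×ˢ C | p.1 < p.2} fun p => f p.1 + f p.2]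
  simp only [matchValue, colorClass, filter_filter]

lemma exists_colorClass_ge [NeZero k] {w : Fin n → Fin n → ℝ} (hw : ZeroDiag w)
    (C : Finset (Fin n)) (f : Fin n → Fin k) :
    ∃ t, (∑ i ∈ C, ∑ j ∈ C, w i j) / k ≤ matchValue w (colorClass C f t) := by
  obtain ⟨t, -, ht⟩ := exists_le_of_sum_le univ_nonempty
    (f := fun _ => (∑ i ∈ C, ∑ j ∈ C, w i j) / k) (g := fun t => matchValue w (colorClass C f t))
    (by
      rw [sum_const, card_univ, Fintype.card_fin, nsmul_eq_mul,
        mul_div_cancel₀ _ (Nat.cast_ne_zero.2 (NeZero.ne k)), sum_matchValue_colorClass,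
        ← sum_product_eq_sum_filter_lt _ _ hw, sum_product])
  exact ⟨t, ht⟩

lemma exists_isMatching_subset_ge_sum_uF {w : Fin n → Fin n → ℝ} (hw : ZeroDiag w)
    (C : Finset (Fin n)) :
    ∃ M ⊆ C ×ˢ C, IsMatching M ∧ ∑ i ∈ C, uF (w i) C ≤ matchValue w M := by
  rcases C.eq_empty_or_nonempty with rfl | hC
  · exact ⟨∅, empty_subset _, by simp [IsMatching], by simp [matchValue]⟩
  have : NeZero #C := ⟨hC.card_pos.ne'⟩
  let f : Fin n → Fin #C := fun i => if h : i ∈ C then C.equivFin ⟨i, h⟩ else 0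
  have hf : Set.InjOn f C := fun i hi j hj hij => by
    simp only [f, dif_pos (mem_coe.1 hi), dif_pos (mem_coe.1 hj)] at hij
    exact congrArg Subtype.val (C.equivFin.injective hij)
  obtain ⟨t, ht⟩ := exists_colorClass_ge hw C f
  refine ⟨colorClass C f t, filter_subset _ _, isMatching_colorClass hf t, ?_⟩
  simpa only [uF, ← sum_div] using ht

end Matching

theorem max_matching_two_approx_FHG (n : ℕ) (w : Fin n → Fin n → ℝ) (hw : ZeroDiag w)
    (m : Finset (Fin n × Fin n)) (hm : IsMatching m)
    (hmax : ∀ m' : Finset (Fin n × Fin n), IsMatching m' →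
      matchValue w m' ≤ matchValue w m)
    (π : HGPartition n) (hπ : InducedByMatching m π) :
    (∀ π' : HGPartition n, swF w π' ≤ 2 * swF w π) ∧
      swF w π = matchValue w m / 2 := by
  have hval := swF_eq_matchValue_div_two hw hm hπ
  refine ⟨fun π' => ?_, hval⟩
  choose! F hFsub hFmatch hFge using exists_isMatching_subset_ge_sum_uF hw
  have hV := π'.pairwiseDisjoint_blocks
  calc swF w π' = ∑ C ∈ π'.blocks, ∑ i ∈ C, uF (w i) C := π'.swF_eq_sum_blocks w
    _ ≤ ∑ C ∈ π'.blocks, matchValue w (F C) := sum_le_sum fun C _ => hFge C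
    _ = matchValue w (π'.blocks.biUnion F) := (matchValue_biUnion w hV fun C _ => hFsub C).symm
    _ ≤ matchValue w m :=
      hmax _ (IsMatching.biUnion hV (fun C _ => hFmatch C) fun C _ => hFsub C)
    _ = 2 * swF w π := by rw [hval]; ring
end
end

section
/- Consider an additively separable hedonic game on n agents whose weights take values in {-x, 0, 1} with x > 2n - 3. Then in any partition π maximizing the social welfare, no coalition contains a negative relation: for every block C of π and all distinct i, j ∈ C, w_ij ≥ 0. -/
noncomputable section

open Finset

/-- General duplex valuations with parameter `x`: every off-diagonal score
lies in `{-x, 0, 1}`. -/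
def GeneralDuplex {n : ℕ} (x : ℝ) (w : Fin n → Fin n → ℝ) : Prop :=
  ∀ i j : Fin n, i ≠ j → w i j = -x ∨ w i j = 0 ∨ w i j = 1

theorem no_negative_relation_in_optimum (n : ℕ) (x : ℝ) (hx : 2 * (n : ℝ) - 3 < x)
    (w : Fin n → Fin n → ℝ) (hw0 : ZeroDiag w) (hw : GeneralDuplex x w)
    (π : HGPartition n) (hopt : ∀ π' : HGPartition n, swA w π' ≤ swA w π) :
    ∀ i j : Fin n, j ∈ π.block i → i ≠ j → 0 ≤ w i j := by

  intro i j hj hij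
  by_contra hneg
  push_neg at hneg
  have hwij : w i j = -x := by
    rcases hw i j hij with h | h | h
    · exact h
    · linarith
    · linarith
  -- n ≥ 2
  have hn2 : (2 : ℝ) ≤ (n : ℝ) := by
    have : Nontrivial (Fin n) := ⟨i, j, hij⟩
    have h2 : 2 ≤ Fintype.card (Fin n) := Fintype.one_lt_card
    rw [Fintype.card_fin] at h2
    exact_mod_cast h2
  have hx0 : (0 : ℝ) < x := by linarith
  have wle : ∀ a b : Fin n, w a b ≤ 1 := by
    intro a b
    by_cases hab : a = b
    · rw [hab, hw0 b]; norm_num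
    · rcases hw a b hab with h | h | h <;> rw [h] <;> linarith
  set C := π.block i with hC
  have hiC : i ∈ C := π.mem_block i
  -- the deviation: i goes alone
  let π' : HGPartition n :=
    { block := fun k => if k = i then {i} else (π.block k).erase i
      mem_block := by
        intro k
        by_cases h : k = i
        · simp [h]
        · simp only [if_neg h]
          exact Finset.mem_erase.2 ⟨h, π.mem_block k⟩
      block_eq := by
        intro k l hl
        by_cases h : k = i
        · subst h
          rw [if_pos rfl, Finset.mem_singleton] at hl
          subst hl
          rfl
        · rw [if_neg h] at hl
          rcases Finset.mem_erase.1 hl with ⟨hli, hlk⟩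
          rw [if_neg hli, if_neg h, π.block_eq k l hlk] }
  have hblk : ∀ k : Fin n, π'.block k = if k = i then {i} else (π.block k).erase i :=
    fun k => rfl
  -- per-agent welfare difference
  have hdiff : ∀ k : Fin n,
      uA (w k) (π.block k) - uA (w k) (π'.block k)
        = if k = i then ∑ m ∈ C, w i m else if k ∈ C then w k i else 0 := by
    intro k
    by_cases h : k = i
    · subst h
      rw [hblk, if_pos rfl, if_pos rfl]
      simp [uA, hw0 k]
      rfl
    · rw [hblk, if_neg h, if_neg h]
      by_cases hk : k ∈ C
      · have hbk : π.block k = C := π.block_eq i k hk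
        rw [if_pos hk, hbk]
        have := Finset.add_sum_erase C (w k) hiC
        simp only [uA]
        linarith
      · have hiB : i ∉ π.block k := by
          intro hiB
          have hbk : π.block i = π.block k := π.block_eq k i hiB
          have hkk : k ∈ π.block k := π.mem_block k
          rw [← hbk] at hkk
          exact hk hkk
        rw [if_neg hk, Finset.erase_eq_of_notMem hiB]
        ring
  have hsw : swA w π - swA w π' = ∑ k ∈ C.erase i, (w i k + w k i) := by
    have h1 : swA w π - swA w π'
        = ∑ k : Fin n, (uA (w k) (π.block k) - uA (w k) (π'.block k)) := by
      rw [Finset.sum_sub_distrib]; rfl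
    rw [h1]
    have h2 : ∑ k : Fin n, (uA (w k) (π.block k) - uA (w k) (π'.block k))
        = ∑ k ∈ C, (uA (w k) (π.block k) - uA (w k) (π'.block k)) := by
      refine (Finset.sum_subset (Finset.subset_univ C) ?_).symm
      intro k _ hk
      rw [hdiff k, if_neg (by rintro rfl; exact hk hiC), if_neg hk]
    rw [h2, ← Finset.add_sum_erase C _ hiC, hdiff i, if_pos rfl]
    have h3 : ∑ k ∈ C.erase i, (uA (w k) (π.block k) - uA (w k) (π'.block k))
        = ∑ k ∈ C.erase i, w k i := by
      refine Finset.sum_congr rfl ?_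
      intro k hk
      rcases Finset.mem_erase.1 hk with ⟨hki, hkC⟩
      rw [hdiff k, if_neg hki, if_pos hkC]
    rw [h3, Finset.sum_add_distrib]
    congr 1
    rw [← Finset.add_sum_erase C (w i) hiC, hw0 i, zero_add]
  -- bound the sum
  set S := C.erase i with hS
  have hjS : j ∈ S := Finset.mem_erase.2 ⟨fun h => hij h.symm, hj⟩
  have hScard : (S.card : ℝ) ≤ (n : ℝ) - 1 := by
    have h1 : S.card + 1 ≤ n := by
      have hSC : S.card + 1 = C.card := by rw [hS]; exact Finset.card_erase_add_one hiC
      have h2 : C.card ≤ n := by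
        simpa using Finset.card_le_card (Finset.subset_univ C)
      omega
    have : (S.card : ℝ) + 1 ≤ (n : ℝ) := by exact_mod_cast h1
    linarith
  have hbound : ∑ k ∈ S, (w i k + w k i) ≤ (w i j + w j i) + 2 * ((S.card : ℝ) - 1) := by
    rw [← Finset.add_sum_erase S _ hjS]
    have hb : ∑ k ∈ S.erase j, (w i k + w k i) ≤ ∑ k ∈ S.erase j, (2 : ℝ) := by
      refine Finset.sum_le_sum ?_
      intro k _
      have := wle i k
      have := wle k i
      linarith
    have hc : ((S.erase j).card : ℝ) = (S.card : ℝ) - 1 := by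
      have := Finset.card_erase_add_one hjS
      have h1 : ((S.erase j).card : ℝ) + 1 = (S.card : ℝ) := by exact_mod_cast this
      linarith
    rw [Finset.sum_const, nsmul_eq_mul] at hb
    rw [hc] at hb
    linarith
  have hji : w j i ≤ 1 := wle j i
  have hlt : swA w π < swA w π' := by
    rw [← sub_neg, hsw]
    calc ∑ k ∈ S, (w i k + w k i)
        ≤ (w i j + w j i) + 2 * ((S.card : ℝ) - 1) := hbound
      _ ≤ -x + 1 + 2 * ((n : ℝ) - 2) := by rw [hwij]; linarith
      _ < 0 := by linarith
  exact absurd (hopt π') (not_le.2 hlt)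
end
end

section
/- For additively separable hedonic games on n agents with general duplex valuations with parameter x > 2n - 3 (declaration domain D = all weight profiles with off-diagonal values in {-x, 0, 1}), every optimal mechanism is non-obviously manipulable. -/
noncomputable section

open Finset

/-- The declaration domain of general duplex valuations with parameter `x`. -/
def DuplexProfile {n : ℕ} (x : ℝ) (w : Fin n → Fin n → ℝ) : Prop :=
  ZeroDiag w ∧ GeneralDuplex x w

/-- A feasible declaration row of agent `i` in the general duplex domain. -/
def DuplexRow {n : ℕ} (x : ℝ) (i : Fin n) (r : Fin n → ℝ) : Prop :=
  r i = 0 ∧ ∀ j : Fin n, j ≠ i → r j = -x ∨ r j = 0 ∨ r j = 1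

/-- The set of ASHG utilities (w.r.t. true row `wi`) agent `i` can obtain under `M`
when declaring `di`, as the others' declarations range over the duplex domain. -/
def utilSetX {n : ℕ} (x : ℝ) (M : (Fin n → Fin n → ℝ) → HGPartition n)
    (i : Fin n) (wi di : Fin n → ℝ) : Set ℝ :=
  {v : ℝ | ∃ d : Fin n → Fin n → ℝ, DuplexProfile x d ∧ d i = di ∧
    v = uA wi ((M d).block i)}

/-- Non-obvious manipulability for ASHGs on the general duplex domain. -/
def NOM_X {n : ℕ} (x : ℝ) (M : (Fin n → Fin n → ℝ) → HGPartition n) : Prop :=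
  ∀ (i : Fin n) (wi di : Fin n → ℝ), DuplexRow x i wi → DuplexRow x i di →
    sSup (utilSetX x M i wi di) ≤ sSup (utilSetX x M i wi wi) ∧
    sInf (utilSetX x M i wi di) ≤ sInf (utilSetX x M i wi wi)

/-- A mechanism on the general duplex domain is optimal if it always outputs a
social-welfare maximizing partition. -/
def OptimalX {n : ℕ} (x : ℝ) (M : (Fin n → Fin n → ℝ) → HGPartition n) : Prop :=
  ∀ d : Fin n → Fin n → ℝ, DuplexProfile x d →
    ∀ π : HGPartition n, swA d π ≤ swA d (M d)

/-!
Optimality rules out any block in which some agent reports `-x` towards a co-member: isolating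
that agent changes welfare by the sum of her scores towards and from her block, which is at most
`-x + 1 + 2 (n - 2) < 0`. Hence a truthful agent never ends up with a disliked co-member, so all
her truthful utilities are nonnegative, while declaring anything she can be left alone (utility
`0`) by the others disliking everybody. Conversely, if exactly the agents she likes form a clique
and everyone else dislikes everybody, every optimal partition makes that clique her block, so
truth-telling attains the largest utility she could ever get.
-/

namespace HGPartition

variable {n : ℕ}

lemma mem_block_symm (π : HGPartition n) {i j : Fin n} (h : j ∈ π.block i) : i ∈ π.block j := by
  rw [π.block_eq i j h]
  exact π.mem_block i

def isolate (π : HGPartition n) (a : Fin n) : HGPartition n where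
  block j := if j = a then {a} else (π.block j).erase a
  mem_block j := by
    by_cases h : j = a
    · simp [h]
    · simp [h, π.mem_block j]
  block_eq j k hk := by
    by_cases h : j = a
    · subst h
      simp_all
    · simp only [if_neg h, mem_erase] at hk
      simp [hk.1, h, π.block_eq j k hk.2]

def ofBlock (S : Finset (Fin n)) : HGPartition n where
  block j := if j ∈ S then S else {j}
  mem_block j := by by_cases h : j ∈ S <;> simp [h]
  block_eq j k hk := by by_cases h : j ∈ S <;> simp_all

end HGPartition

section Utility

variable {n : ℕ}

lemma uA_le_uA_filter_pos (wi : Fin n → ℝ) (C : Finset (Fin n)) :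
    uA wi C ≤ uA wi (univ.filter fun j => 0 < wi j) := by
  calc uA wi C ≤ ∑ j ∈ C, if 0 < wi j then wi j else 0 :=
        sum_le_sum fun j _ => by split_ifs with h; exacts [le_rfl, not_lt.mp h]
    _ = uA wi (C.filter fun j => 0 < wi j) := by rw [uA, sum_filter]
    _ ≤ uA wi (univ.filter fun j => 0 < wi j) :=
        sum_le_sum_of_subset_of_nonneg (filter_subset_filter _ (subset_univ C))
          fun j hj _ => (mem_filter.mp hj).2.le

lemma uA_filter_neg_le (wi : Fin n → ℝ) (C : Finset (Fin n)) :
    uA wi (univ.filter fun j => wi j < 0) ≤ uA wi C := by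
  calc uA wi (univ.filter fun j => wi j < 0) ≤ uA wi (C.filter fun j => wi j < 0) :=
        sum_le_sum_of_subset_of_nonpos' (filter_subset_filter _ (subset_univ C))
          fun j hj _ => (mem_filter.mp hj).2.le
    _ = ∑ j ∈ C, if wi j < 0 then wi j else 0 := by rw [uA, sum_filter]
    _ ≤ uA wi C := sum_le_sum fun j _ => by split_ifs with h; exacts [le_rfl, not_lt.mp h]

lemma uA_eq_card_sub_one {wi : Fin n → ℝ} {B : Finset (Fin n)} {j : Fin n} (hj : j ∈ B)
    (hjj : wi j = 0) (hB : ∀ l ∈ B, l ≠ j → wi l = 1) :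
    uA wi B = (B.card : ℝ) - 1 := by
  rw [uA, ← add_sum_erase _ _ hj, hjj,
    sum_congr rfl fun l hl => hB l (mem_of_mem_erase hl) (ne_of_mem_erase hl), sum_const,
    card_erase_of_mem hj, nsmul_eq_mul, mul_one, Nat.cast_sub (card_pos.mpr ⟨j, hj⟩)]
  push_cast
  ring

lemma swA_sub_swA_isolate {d : Fin n → Fin n → ℝ} (π : HGPartition n) {a : Fin n}
    (haa : d a a = 0) :
    swA d π - swA d (π.isolate a) = ∑ j ∈ π.block a, (d a j + d j a) := by
  set C := π.block a
  have hterm : ∀ i, uA (d i) (π.block i) - uA (d i) ((π.isolate a).block i)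
      = (if i = a then uA (d a) C else 0) + (if i ∈ C then d i a else 0) := by
    intro i
    by_cases hia : i = a
    · subst hia
      simp [HGPartition.isolate, uA, haa, C, π.mem_block i]
    by_cases hiC : i ∈ C
    · have hblock : π.block i = C := π.block_eq a i hiC
      simp only [HGPartition.isolate, if_neg hia, if_pos hiC, hblock, uA, zero_add]
      rw [← add_sum_erase _ _ (π.mem_block a)]
      ring
    · have haC : a ∉ π.block i := fun h => hiC (π.mem_block_symm h)
      simp [HGPartition.isolate, hia, hiC, erase_eq_of_notMem haC]
  rw [swA, swA, ← sum_sub_distrib, sum_congr rfl fun i _ => hterm i, sum_add_distrib,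
    sum_ite_eq', if_pos (mem_univ a), sum_ite_mem, univ_inter, sum_add_distrib, uA]

end Utility

section Duplex

variable {n : ℕ} {x : ℝ}

lemma one_lt_of_ne {a b : Fin n} (hab : a ≠ b) (hx : 2 * (n : ℝ) - 3 < x) : 1 < x := by
  have : Nontrivial (Fin n) := ⟨⟨a, b, hab⟩⟩
  have hn : (2 : ℝ) ≤ n := by exact_mod_cast Fin.nontrivial_iff_two_le.mp this
  linarith

lemma DuplexProfile.le_one {d : Fin n → Fin n → ℝ} (hd : DuplexProfile x d) (hx : -1 ≤ x)
    (a b : Fin n) : d a b ≤ 1 := by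
  by_cases hab : a = b
  · rw [hab, hd.1 b]
    exact zero_le_one
  · rcases hd.2 a b hab with h | h | h <;> rw [h] <;> linarith

lemma DuplexRow.eq_one_of_pos {i j : Fin n} {r : Fin n → ℝ} (hr : DuplexRow x i r) (hx : 0 ≤ x)
    (hpos : 0 < r j) : r j = 1 := by
  have hji : j ≠ i := fun h => by rw [h, hr.1] at hpos; exact lt_irrefl 0 hpos
  rcases hr.2 j hji with h | h | h <;> rw [h] at hpos ⊢ <;> linarith

lemma DuplexRow.nonneg_of_ne_neg {i j : Fin n} {r : Fin n → ℝ} (hr : DuplexRow x i r)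
    (hj : r j ≠ -x) : 0 ≤ r j := by
  by_cases hji : j = i
  · rw [hji, hr.1]
  · rcases hr.2 j hji with h | h | h <;> simp_all

lemma DuplexProfile.ne_neg_of_mem_block {d : Fin n → Fin n → ℝ} (hd : DuplexProfile x d)
    (hx : 2 * (n : ℝ) - 3 < x) {π : HGPartition n} (hopt : ∀ π', swA d π' ≤ swA d π)
    {a b : Fin n} (hab : a ≠ b) (hb : b ∈ π.block a) : d a b ≠ -x := by
  intro hneg
  set C := π.block a
  have hx1 := one_lt_of_ne hab hx
  have ha : a ∈ C := π.mem_block a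
  have hbC : b ∈ C.erase a := mem_erase.mpr ⟨Ne.symm hab, hb⟩
  have hcard : (((C.erase a).erase b).card : ℝ) + 2 ≤ n := by
    have h := card_le_univ C
    rw [← card_erase_add_one ha, ← card_erase_add_one hbC, Fintype.card_fin] at h
    exact_mod_cast (by omega : ((C.erase a).erase b).card + 2 ≤ n)
  have hrest : ∑ j ∈ (C.erase a).erase b, (d a j + d j a)
      ≤ (((C.erase a).erase b).card : ℝ) * 2 := by
    simpa using sum_le_card_nsmul _ _ (2 : ℝ) fun j _ => by
      linarith [hd.le_one (by linarith) a j, hd.le_one (by linarith) j a]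
  have hsplit : ∑ j ∈ C, (d a j + d j a)
      = (d a a + d a a) + (d a b + d b a) + ∑ j ∈ (C.erase a).erase b, (d a j + d j a) := by
    rw [← add_sum_erase _ _ ha, ← add_sum_erase _ _ hbC]
    ring
  have hgain := swA_sub_swA_isolate π (hd.1 a) ▸ sub_nonneg.mpr (hopt (π.isolate a))
  rw [hsplit, hd.1 a, hneg] at hgain
  linarith [hd.le_one (by linarith) b a]

lemma swA_eq_sum_card_sub_one {d : Fin n → Fin n → ℝ} (hd : ZeroDiag d) {S : Finset (Fin n)}
    (hS : ∀ a ∈ S, ∀ b ∈ S, a ≠ b → d a b = 1) {π : HGPartition n}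
    (hsub : ∀ j ∈ S, π.block j ⊆ S) (hsing : ∀ j ∉ S, π.block j = {j}) :
    swA d π = ∑ j ∈ S, ((π.block j).card - 1 : ℝ) := by
  rw [swA, ← sum_subset (subset_univ S)]
  · exact sum_congr rfl fun j hj => uA_eq_card_sub_one (π.mem_block j) (hd j)
      fun l hl hlj => hS j hj l (hsub j hj hl) (Ne.symm hlj)
  · intro j _ hj
    simp [hsing j hj, uA, hd j]

lemma DuplexProfile.block_eq_of_clique {d : Fin n → Fin n → ℝ} (hd : DuplexProfile x d)
    (hx : 2 * (n : ℝ) - 3 < x) {π : HGPartition n} (hopt : ∀ π', swA d π' ≤ swA d π)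
    {S : Finset (Fin n)} (hS : ∀ a ∈ S, ∀ b ∈ S, a ≠ b → d a b = 1)
    (hout : ∀ a ∉ S, ∀ b, b ≠ a → d a b = -x) {i : Fin n} (hi : i ∈ S) :
    π.block i = S := by
  have hsub : ∀ j ∈ S, π.block j ⊆ S := fun j hj o ho => by
    by_contra hoS
    have hoj : o ≠ j := fun h => hoS (h ▸ hj)
    exact hd.ne_neg_of_mem_block hx hopt hoj (π.mem_block_symm ho) (hout o hoS j hoj.symm)
  have hsing : ∀ j ∉ S, π.block j = {j} := fun j hj =>
    eq_singleton_iff_unique_mem.mpr ⟨π.mem_block j, fun b hb => by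
      by_contra hbj
      exact hd.ne_neg_of_mem_block hx hopt (Ne.symm hbj) hb (hout j hj b hbj)⟩
  have hle : ∀ j ∈ S, ((π.block j).card - 1 : ℝ) ≤ (S.card - 1 : ℝ) := fun j hj => by
    have := card_le_card (hsub j hj)
    gcongr
  have hgroup : ∑ j ∈ S, (S.card - 1 : ℝ) ≤ ∑ j ∈ S, ((π.block j).card - 1 : ℝ) := by
    have hblock : ∀ j ∈ S, (HGPartition.ofBlock S).block j = S := fun j hj => if_pos hj
    have h := hopt (HGPartition.ofBlock S)
    rwa [swA_eq_sum_card_sub_one hd.1 hS hsub hsing,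
      swA_eq_sum_card_sub_one hd.1 hS (fun j hj => (hblock j hj).subset) (fun j hj => if_neg hj),
      sum_congr rfl fun j hj => by rw [hblock j hj]] at h
  have hcard := (sum_eq_sum_iff_of_le hle).mp (le_antisymm (sum_le_sum hle) hgroup) i hi
  exact eq_of_subset_of_card_le (hsub i hi) (by exact_mod_cast (sub_left_inj.mp hcard).ge)

end Duplex

section Mechanism

variable {n : ℕ} {x : ℝ}

def cliqueProfile (x : ℝ) (i : Fin n) (r : Fin n → ℝ) (S : Finset (Fin n)) :
    Fin n → Fin n → ℝ :=
  fun j l => if j = i then r l else if l = j then 0 else if j ∈ S ∧ l ∈ S then 1 else -x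

lemma duplexProfile_cliqueProfile {i : Fin n} {r : Fin n → ℝ} (hr : DuplexRow x i r)
    (S : Finset (Fin n)) : DuplexProfile x (cliqueProfile x i r S) := by
  constructor
  · intro j
    by_cases h : j = i
    · simp [cliqueProfile, h, hr.1]
    · simp [cliqueProfile, h]
  · intro j l hjl
    by_cases h : j = i
    · subst h
      simpa [cliqueProfile] using hr.2 l (Ne.symm hjl)
    · by_cases hS : j ∈ S ∧ l ∈ S <;> simp [cliqueProfile, h, Ne.symm hjl, hS]

lemma uA_mem_utilSetX_of_clique (hx : 2 * (n : ℝ) - 3 < x)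
    {M : (Fin n → Fin n → ℝ) → HGPartition n} (hM : OptimalX x M) {i : Fin n}
    {wi r : Fin n → ℝ} (hr : DuplexRow x i r) {S : Finset (Fin n)} (hi : i ∈ S)
    (hrS : ∀ b ∈ S, b ≠ i → r b = 1) :
    uA wi S ∈ utilSetX x M i wi r := by
  have hd := duplexProfile_cliqueProfile hr S
  have hS : ∀ a ∈ S, ∀ b ∈ S, a ≠ b → cliqueProfile x i r S a b = 1 := by
    intro a ha b hb hab
    by_cases hai : a = i
    · subst hai
      simpa [cliqueProfile] using hrS b hb (Ne.symm hab)
    · simp [cliqueProfile, hai, Ne.symm hab, ha, hb]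
  have hout : ∀ a ∉ S, ∀ b, b ≠ a → cliqueProfile x i r S a b = -x := by
    intro a ha b hba
    have hai : a ≠ i := fun h => ha (h ▸ hi)
    simp [cliqueProfile, hai, hba, ha]
  refine ⟨cliqueProfile x i r S, hd, funext fun l => by simp [cliqueProfile], ?_⟩
  rw [hd.block_eq_of_clique hx (hM _ hd) hS hout hi]

lemma zero_mem_utilSetX (hx : 2 * (n : ℝ) - 3 < x)
    {M : (Fin n → Fin n → ℝ) → HGPartition n} (hM : OptimalX x M) {i : Fin n}
    {wi di : Fin n → ℝ} (hwi : wi i = 0) (hdi : DuplexRow x i di) :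
    0 ∈ utilSetX x M i wi di := by
  simpa [uA, hwi] using uA_mem_utilSetX_of_clique (wi := wi) hx hM hdi (mem_singleton_self i)
    (by simp)

lemma uA_filter_pos_mem_utilSetX_self (hx : 2 * (n : ℝ) - 3 < x)
    {M : (Fin n → Fin n → ℝ) → HGPartition n} (hM : OptimalX x M) {i : Fin n}
    {wi : Fin n → ℝ} (hwi : DuplexRow x i wi) :
    uA wi (univ.filter fun j => 0 < wi j) ∈ utilSetX x M i wi wi := by
  set P := univ.filter fun j => 0 < wi j
  have hiP : i ∉ P := by simp [P, hwi.1]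
  have hmem := uA_mem_utilSetX_of_clique (wi := wi) hx hM hwi (mem_insert_self i P)
    fun b hb hbi => hwi.eq_one_of_pos (zero_le_one.trans (one_lt_of_ne hbi hx).le)
      (mem_filter.mp ((mem_insert.mp hb).resolve_left hbi)).2
  rwa [uA, sum_insert hiP, hwi.1, zero_add] at hmem

lemma nonneg_of_mem_utilSetX_self (hx : 2 * (n : ℝ) - 3 < x)
    {M : (Fin n → Fin n → ℝ) → HGPartition n} (hM : OptimalX x M) {i : Fin n}
    {wi : Fin n → ℝ} (hwi : DuplexRow x i wi) {v : ℝ} (hv : v ∈ utilSetX x M i wi wi) :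
    0 ≤ v := by
  obtain ⟨d, hd, hdi, rfl⟩ := hv
  refine sum_nonneg fun j hj => ?_
  by_cases hji : j = i
  · rw [hji, hwi.1]
  · refine hwi.nonneg_of_ne_neg ?_
    rw [← hdi]
    exact hd.ne_neg_of_mem_block hx (hM d hd) (Ne.symm hji) hj

lemma le_of_mem_utilSetX {M : (Fin n → Fin n → ℝ) → HGPartition n} {i : Fin n}
    {wi r : Fin n → ℝ} {v : ℝ} (hv : v ∈ utilSetX x M i wi r) :
    v ≤ uA wi (univ.filter fun j => 0 < wi j) := by
  obtain ⟨d, -, -, rfl⟩ := hv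
  exact uA_le_uA_filter_pos wi _

lemma bddBelow_utilSetX (M : (Fin n → Fin n → ℝ) → HGPartition n) (i : Fin n)
    (wi r : Fin n → ℝ) : BddBelow (utilSetX x M i wi r) := by
  refine ⟨uA wi (univ.filter fun j => wi j < 0), ?_⟩
  rintro v ⟨d, -, -, rfl⟩
  exact uA_filter_neg_le wi _

end Mechanism

theorem optimal_implies_NOM_duplex_large_x (n : ℕ) (x : ℝ)
    (hx : 2 * (n : ℝ) - 3 < x)
    (M : (Fin n → Fin n → ℝ) → HGPartition n) (hM : OptimalX x M) :
    NOM_X x M := by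
  intro i wi di hwi hdi
  have htop := uA_filter_pos_mem_utilSetX_self hx hM hwi
  have hzero := zero_mem_utilSetX hx hM hwi.1 hdi
  constructor
  · calc sSup (utilSetX x M i wi di) ≤ uA wi (univ.filter fun j => 0 < wi j) :=
          csSup_le ⟨0, hzero⟩ fun v hv => le_of_mem_utilSetX hv
      _ ≤ sSup (utilSetX x M i wi wi) :=
          le_csSup ⟨_, fun v hv => le_of_mem_utilSetX hv⟩ htop
  · calc sInf (utilSetX x M i wi di) ≤ 0 := csInf_le (bddBelow_utilSetX M i wi di) hzero
      _ ≤ sInf (utilSetX x M i wi wi) :=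
          le_csInf ⟨_, htop⟩ fun v hv => nonneg_of_mem_utilSetX_self hx hM hwi hv
end
end

section
/- For additively separable hedonic games on n ≥ 4 agents with general duplex valuations with parameter x satisfying 1 < x < 2n - 3 (declaration domain D = all weight profiles with off-diagonal values in {-x, 0, 1}), no optimal mechanism is non-obviously manipulable: every optimal mechanism admits an obvious manipulation. -/
noncomputable section

open Finset

namespace NOMAux

variable {n : ℕ}

/-- The grand-coalition partition. -/
def gpart (n : ℕ) : HGPartition n :=
  ⟨fun _ => Finset.univ, fun i => Finset.mem_univ i, fun _ _ _ => rfl⟩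

/-- Isolate agent `i` from partition `π`. -/
def expart (π : HGPartition n) (i : Fin n) : HGPartition n where
  block j := if j = i then {i} else if j ∈ π.block i then (π.block i).erase i else π.block j
  mem_block j := by
    by_cases hj : j = i
    · subst hj; simp
    · by_cases hb : j ∈ π.block i
      · simp [hj, hb]
      · simp [hj, hb, π.mem_block j]
  block_eq j m hm := by
    by_cases hj : j = i
    · subst hj
      simp only [eq_self_iff_true, if_true, Finset.mem_singleton] at hm
      subst hm
      simp
    · by_cases hb : j ∈ π.block i
      · simp only [if_neg hj, if_pos hb, Finset.mem_erase] at hm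
        simp [hm.1, hm.2, hj, hb]
      · simp only [if_neg hj, if_neg hb] at hm
        have hbm : π.block m = π.block j := π.block_eq j m hm
        have hmi : m ≠ i := by
          rintro rfl
          exact hb (hbm.symm ▸ π.mem_block j)
        have hmb : m ∉ π.block i := by
          intro hmem
          have h2 : π.block m = π.block i := π.block_eq i m hmem
          have : π.block i = π.block j := h2.symm.trans hbm
          exact hb (this.symm ▸ π.mem_block j)
        simp [hmi, hmb, hbm, hj, hb]

lemma swA_expart (d : Fin n → Fin n → ℝ) (i : Fin n) (π : HGPartition n) :
    swA d (expart π i) =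
      swA d π - uA (d i) (π.block i) + d i i - ∑ j ∈ (π.block i).erase i, d j i := by
  classical
  have hiB : i ∈ π.block i := π.mem_block i
  unfold swA
  rw [← Finset.sum_add_sum_compl (π.block i) (fun j => uA (d j) ((expart π i).block j)),
      ← Finset.sum_add_sum_compl (π.block i) (fun j => uA (d j) (π.block j))]
  have hcompl : ∑ j ∈ (π.block i)ᶜ, uA (d j) ((expart π i).block j)
      = ∑ j ∈ (π.block i)ᶜ, uA (d j) (π.block j) := by
    apply Finset.sum_congr rfl
    intro j hj
    rw [Finset.mem_compl] at hj
    have hji : j ≠ i := fun h => hj (h ▸ hiB)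
    simp [expart, hji, hj]
  rw [hcompl]
  have hin : ∀ j ∈ π.block i, π.block j = π.block i := fun j hj => π.block_eq i j hj
  have hL : ∑ j ∈ π.block i, uA (d j) ((expart π i).block j)
      = d i i + ∑ j ∈ (π.block i).erase i, (uA (d j) (π.block i) - d j i) := by
    rw [← Finset.insert_erase hiB, Finset.sum_insert (Finset.notMem_erase i _)]
    congr 1
    · simp [expart, uA]
    · rw [Finset.insert_erase hiB]
      apply Finset.sum_congr rfl
      intro j hj
      rw [Finset.mem_erase] at hj
      have hblk : (expart π i).block j = (π.block i).erase i := by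
        simp [expart, hj.1, hj.2]
      rw [hblk]
      unfold uA
      rw [Finset.sum_erase_eq_sub hiB]
  have hR : ∑ j ∈ π.block i, uA (d j) (π.block j)
      = uA (d i) (π.block i) + ∑ j ∈ (π.block i).erase i, uA (d j) (π.block i) := by
    rw [← Finset.insert_erase hiB, Finset.sum_insert (Finset.notMem_erase i _)]
    congr 1
    · rw [Finset.insert_erase hiB]
    · rw [Finset.insert_erase hiB]
      apply Finset.sum_congr rfl
      intro j hj
      rw [Finset.mem_erase] at hj
      rw [hin j hj.2]
  rw [hL, hR, Finset.sum_sub_distrib]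
  ring

lemma lie_isolates (x : ℝ) (hx : 1 < x) (d : Fin n → Fin n → ℝ) (hd : DuplexProfile x d)
    (i : Fin n) (hdi : ∀ j, j ≠ i → d i j = -x)
    (π : HGPartition n) (hopt : ∀ π', swA d π' ≤ swA d π) :
    π.block i = {i} := by
  by_contra hne
  have hiB : i ∈ π.block i := π.mem_block i
  have hcard : 1 < (π.block i).card := by
    rw [Finset.one_lt_card]
    by_contra h
    push_neg at h
    apply hne
    apply Finset.eq_singleton_iff_unique_mem.2
    exact ⟨hiB, fun m hm => by
      by_contra hmi
      exact hmi (h m hm i hiB)⟩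
  set c : ℕ := (π.block i).card - 1 with hc
  have hc1 : 1 ≤ c := by omega
  have hcerase : ((π.block i).erase i).card = c := by
    rw [Finset.card_erase_of_mem hiB]
  have huAi : uA (d i) (π.block i) = (c : ℝ) * (-x) := by
    unfold uA
    rw [← Finset.insert_erase hiB, Finset.sum_insert (Finset.notMem_erase i _), hd.1 i]
    rw [Finset.sum_congr rfl (fun j hj => hdi j (Finset.mem_erase.1 hj).1),
        Finset.sum_const, hcerase]
    simp [mul_comm]
  have hsum : ∑ j ∈ (π.block i).erase i, d j i ≤ (c : ℝ) := by
    calc ∑ j ∈ (π.block i).erase i, d j i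
        ≤ ((π.block i).erase i).card • (1 : ℝ) := by
          apply Finset.sum_le_card_nsmul
          intro j hj
          rcases hd.2 j i (Finset.mem_erase.1 hj).1 with h | h | h <;> rw [h] <;> linarith
      _ = (c : ℝ) := by rw [hcerase]; simp
  have hgain : swA d π < swA d (expart π i) := by
    rw [swA_expart, huAi, hd.1 i]
    have : (1:ℝ) ≤ (c:ℝ) := by exact_mod_cast hc1
    nlinarith
  exact absurd (hopt (expart π i)) (not_le.2 hgain)

/-- The true row: 1 to members of `Fset`, `-x` to `b`, 0 elsewhere. -/
def wrow (x : ℝ) (Fset : Finset (Fin n)) (b : Fin n) : Fin n → ℝ :=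
  fun j => (if j ∈ Fset then (1:ℝ) else 0) + (if j = b then -x else 0)

lemma uA_wrow (x : ℝ) (Fset : Finset (Fin n)) (b : Fin n) (C : Finset (Fin n)) :
    uA (wrow x Fset b) C = ((C ∩ Fset).card : ℝ) + (if b ∈ C then -x else 0) := by
  unfold uA wrow
  rw [Finset.sum_add_distrib, Finset.sum_ite_mem, Finset.sum_const,
      Finset.sum_ite_eq' C b (fun _ => -x)]
  simp

/-- The forcing profile: agent `i0` declares `wrow`, everyone else all-ones. -/
def dTruth (x : ℝ) (Fset : Finset (Fin n)) (b i0 : Fin n) : Fin n → Fin n → ℝ :=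
  fun j => if j = i0 then wrow x Fset b else fun m => if m = j then 0 else 1

lemma swA_dTruth (x : ℝ) (Fset : Finset (Fin n)) (b i0 : Fin n) (π : HGPartition n) :
    swA (dTruth x Fset b i0) π =
      uA (wrow x Fset b) (π.block i0)
        + (∑ j ∈ Finset.univ.erase i0, ((π.block j).card : ℝ)) - ((n : ℝ) - 1) := by
  unfold swA
  rw [← Finset.insert_erase (Finset.mem_univ i0),
      Finset.sum_insert (Finset.notMem_erase i0 _)]
  have h1 : dTruth x Fset b i0 i0 = wrow x Fset b := if_pos rfl
  have h2 : ∑ j ∈ Finset.univ.erase i0, uA (dTruth x Fset b i0 j) (π.block j)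
      = ∑ j ∈ Finset.univ.erase i0, (((π.block j).card : ℝ) - 1) := by
    apply Finset.sum_congr rfl
    intro j hj
    rw [Finset.mem_erase] at hj
    have hrow : dTruth x Fset b i0 j = fun m => if m = j then 0 else 1 := if_neg hj.1
    rw [hrow]
    unfold uA
    have : ∀ m : Fin n, (if m = j then (0:ℝ) else 1) = 1 - (if m = j then 1 else 0) := by
      intro m; split <;> ring
    rw [Finset.sum_congr rfl (fun m _ => this m), Finset.sum_sub_distrib,
        Finset.sum_const, Finset.sum_ite_eq' (π.block j) j (fun _ => (1:ℝ)),
        if_pos (π.mem_block j)]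
    simp
  rw [h1, h2, Finset.sum_sub_distrib, Finset.sum_const, Finset.card_erase_of_mem
      (Finset.mem_univ i0), Finset.card_univ, Fintype.card_fin]
  have hn1 : 1 ≤ n := (i0).pos
  have : ((n - 1 : ℕ) : ℝ) = (n : ℝ) - 1 := by
    push_cast [Nat.cast_sub hn1]; ring
  simp only [nsmul_eq_mul, mul_one]
  rw [this, Finset.erase_insert (Finset.notMem_erase i0 _)]
  ring

lemma truth_main (x : ℝ) (hn : 4 ≤ n) (hx1 : 1 < x)
    (Fset : Finset (Fin n)) (i0 b : Fin n)
    (hib : i0 ≠ b) (hi0F : i0 ∉ Fset) (hbF : b ∉ Fset)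
    (hxlt : x < (Fset.card : ℝ) + ((n : ℝ) - 1))
    (π : HGPartition n) (hne : π.block i0 ≠ Finset.univ) :
    swA (dTruth x Fset b i0) π < swA (dTruth x Fset b i0) (gpart n) := by
  classical
  rw [swA_dTruth, swA_dTruth]
  -- grand side
  have hgb : ∀ j : Fin n, (gpart n).block j = Finset.univ := fun _ => rfl
  have hG : uA (wrow x Fset b) ((gpart n).block i0)
        + (∑ j ∈ Finset.univ.erase i0, (((gpart n).block j).card : ℝ)) - ((n:ℝ) - 1)
      = ((Fset.card : ℝ) - x) + ((n:ℝ) - 1) * (n:ℝ) - ((n:ℝ) - 1) := by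
    rw [hgb, uA_wrow]
    have h1 : Finset.univ ∩ Fset = Fset := by simp
    have h2 : ∑ j ∈ Finset.univ.erase i0, (((gpart n).block j).card : ℝ)
        = ((n:ℝ) - 1) * (n:ℝ) := by
      rw [Finset.sum_congr rfl (fun j _ => by rw [hgb j, Finset.card_univ, Fintype.card_fin]),
          Finset.sum_const, Finset.card_erase_of_mem (Finset.mem_univ i0),
          Finset.card_univ, Fintype.card_fin]
      have hn1 : 1 ≤ n := by omega
      rw [nsmul_eq_mul]
      push_cast [Nat.cast_sub hn1]
      ring
    rw [h1, h2, if_pos (Finset.mem_univ b)]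
    ring
  rw [hG]
  -- π side
  set B := π.block i0 with hB
  have hiB : i0 ∈ B := π.mem_block i0
  set s : ℕ := B.card with hs
  have hs1 : 1 ≤ s := Finset.card_pos.2 ⟨i0, hiB⟩
  have hsn : s < n := by
    have : B ⊂ Finset.univ := Finset.ssubset_univ_iff.2 hne
    have := Finset.card_lt_card this
    simpa using this
  -- the sum bound
  have hSsplit : Finset.univ.erase i0 = (B.erase i0) ∪ (Finset.univ \ B) := by
    ext j
    simp only [Finset.mem_erase, Finset.mem_univ, Finset.mem_union, Finset.mem_sdiff,
      and_true, true_and]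
    constructor
    · intro hj
      by_cases h : j ∈ B
      · exact Or.inl ⟨hj, h⟩
      · exact Or.inr h
    · rintro (⟨h, _⟩ | h)
      · exact h
      · rintro rfl; exact h hiB
  have hdisj : Disjoint (B.erase i0) (Finset.univ \ B) := by
    apply Finset.disjoint_left.2
    intro j hj hj'
    exact (Finset.mem_sdiff.1 hj').2 (Finset.mem_erase.1 hj).2
  have hS : ∑ j ∈ Finset.univ.erase i0, ((π.block j).card : ℝ)
      ≤ ((s:ℝ) - 1) * (s:ℝ) + ((n:ℝ) - (s:ℝ)) * ((n:ℝ) - (s:ℝ)) := by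
    rw [hSsplit, Finset.sum_union hdisj]
    have hA : ∑ j ∈ B.erase i0, ((π.block j).card : ℝ) = ((s:ℝ) - 1) * (s:ℝ) := by
      rw [Finset.sum_congr rfl (fun j hj => by
        rw [π.block_eq i0 j (Finset.mem_erase.1 hj).2, ← hB, ← hs]),
        Finset.sum_const, Finset.card_erase_of_mem hiB, ← hs, nsmul_eq_mul]
      push_cast [Nat.cast_sub hs1]
      ring
    have hBnd : ∀ j ∈ Finset.univ \ B, ((π.block j).card : ℝ) ≤ (n:ℝ) - (s:ℝ) := by
      intro j hj
      have hjB : j ∉ B := (Finset.mem_sdiff.1 hj).2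
      have hsub : π.block j ⊆ Finset.univ \ B := by
        intro m hm
        rw [Finset.mem_sdiff]
        refine ⟨Finset.mem_univ m, fun hmB => ?_⟩
        have e1 : π.block m = π.block j := π.block_eq j m hm
        have e2 : π.block m = π.block i0 := π.block_eq i0 m hmB
        exact hjB (by rw [hB, ← e2, e1]; exact π.mem_block j)
      have := Finset.card_le_card hsub
      rw [Finset.card_sdiff_of_subset (Finset.subset_univ B), Finset.card_univ, Fintype.card_fin] at this
      have : ((π.block j).card : ℝ) ≤ ((n - s : ℕ) : ℝ) := by exact_mod_cast this
      rwa [Nat.cast_sub (le_of_lt hsn)] at this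
    have hB2 : ∑ j ∈ Finset.univ \ B, ((π.block j).card : ℝ)
        ≤ ((n:ℝ) - (s:ℝ)) * ((n:ℝ) - (s:ℝ)) := by
      calc ∑ j ∈ Finset.univ \ B, ((π.block j).card : ℝ)
          ≤ (Finset.univ \ B).card • ((n:ℝ) - (s:ℝ)) :=
            Finset.sum_le_card_nsmul _ _ _ hBnd
        _ = ((n:ℝ) - (s:ℝ)) * ((n:ℝ) - (s:ℝ)) := by
            rw [Finset.card_sdiff_of_subset (Finset.subset_univ B), Finset.card_univ, Fintype.card_fin,
              nsmul_eq_mul, Nat.cast_sub (le_of_lt hsn)]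
    linarith [hA, hB2]
  -- utility bound for i0
  rw [uA_wrow]
  have hcap : ∀ h : Finset (Fin n), True := fun _ => trivial
  have hκ : (0:ℝ) ≤ (Fset.card : ℝ) := by positivity
  have hsR1 : (1:ℝ) ≤ (s:ℝ) := by exact_mod_cast hs1
  have hsRn : (s:ℝ) ≤ (n:ℝ) - 1 := by
    have : s + 1 ≤ n := hsn
    have : ((s+1 : ℕ):ℝ) ≤ (n:ℝ) := by exact_mod_cast this
    push_cast at this; linarith
  by_cases hbB : b ∈ B
  · -- c ≤ s - 2
    have hs2 : 2 ≤ s := by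
      rw [hs]
      apply Finset.one_lt_card.2
      exact ⟨i0, hiB, b, hbB, hib⟩
    have hcB : ((B ∩ Fset).card : ℝ) ≤ (s:ℝ) - 2 := by
      have hsub : B ∩ Fset ⊆ (B.erase i0).erase b := by
        intro m hm
        rw [Finset.mem_inter] at hm
        rw [Finset.mem_erase, Finset.mem_erase]
        exact ⟨fun h => hbF (h ▸ hm.2), fun h => hi0F (h ▸ hm.2), hm.1⟩
      have h1 := Finset.card_le_card hsub
      have h2 : ((B.erase i0).erase b).card = s - 2 := by
        rw [Finset.card_erase_of_mem, Finset.card_erase_of_mem hiB]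
        · omega
        · rw [Finset.mem_erase]; exact ⟨fun h => hib h.symm, hbB⟩
      rw [h2] at h1
      have : ((B ∩ Fset).card : ℝ) ≤ ((s - 2 : ℕ) : ℝ) := by exact_mod_cast h1
      rwa [Nat.cast_sub hs2] at this
    rw [if_pos hbB]
    nlinarith [mul_nonneg (sub_nonneg.2 hsR1) (sub_nonneg.2 hsRn)]
  · have hcB : ((B ∩ Fset).card : ℝ) ≤ (s:ℝ) - 1 := by
      have hsub : B ∩ Fset ⊆ B.erase i0 := by
        intro m hm
        rw [Finset.mem_inter] at hm
        rw [Finset.mem_erase]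
        exact ⟨fun h => hi0F (h ▸ hm.2), hm.1⟩
      have h1 := Finset.card_le_card hsub
      rw [Finset.card_erase_of_mem hiB] at h1
      have : ((B ∩ Fset).card : ℝ) ≤ ((s - 1 : ℕ) : ℝ) := by exact_mod_cast h1
      rw [Nat.cast_sub hs1] at this
      push_cast at this
      linarith
    rw [if_neg hbB]
    nlinarith [mul_nonneg (sub_nonneg.2 hsR1) (sub_nonneg.2 hsRn)]

end NOMAux

theorem no_optimal_is_NOM_duplex_mid_x (n : ℕ) (hn : 4 ≤ n) (x : ℝ)
    (hx1 : 1 < x) (hx2 : x < 2 * (n : ℝ) - 3)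
    (M : (Fin n → Fin n → ℝ) → HGPartition n) (hM : OptimalX x M) :
    ¬ NOM_X x M := by
  classical
  intro hNOM
  have h0n : 0 < n := by omega
  have h1n : 1 < n := by omega
  set i0 : Fin n := ⟨0, h0n⟩ with hi0
  set b : Fin n := ⟨1, h1n⟩ with hbdef
  have hib : i0 ≠ b := by simp [hi0, hbdef, Fin.ext_iff]
  set k : ℕ := min (n - 2) (⌈x⌉₊ - 1) with hk
  have hx0 : (0:ℝ) ≤ x := by linarith
  have hceil2 : 2 ≤ ⌈x⌉₊ := by
    have : (1:ℕ) < ⌈x⌉₊ := Nat.lt_ceil.2 (by exact_mod_cast hx1)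
    omega
  have hk_ceil : k + 1 ≤ ⌈x⌉₊ := by omega
  have hkx : (k:ℝ) < x := by
    have h1 : ((k:ℕ):ℝ) + 1 ≤ (⌈x⌉₊ : ℝ) := by exact_mod_cast hk_ceil
    have h2 : (⌈x⌉₊ : ℝ) < x + 1 := Nat.ceil_lt_add_one hx0
    linarith
  have hk_le : k ≤ n - 2 := min_le_left _ _
  have h2k : 2 + k ≤ n := by omega
  have hxk : x < (k:ℝ) + ((n:ℝ) - 1) := by
    have hn4 : (4:ℝ) ≤ (n:ℝ) := by exact_mod_cast hn
    rcases le_or_gt (n-2) (⌈x⌉₊ - 1) with h | h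
    · have hkeq : k = n - 2 := by omega
      have hc : ((k:ℕ):ℝ) = (n:ℝ) - 2 := by
        rw [hkeq]; push_cast [Nat.cast_sub (by omega : 2 ≤ n)]; ring
      rw [hc]; linarith
    · have hkeq : k = ⌈x⌉₊ - 1 := by omega
      have h1 : x ≤ (⌈x⌉₊:ℝ) := Nat.le_ceil x
      have h2 : ((k:ℕ):ℝ) = (⌈x⌉₊:ℝ) - 1 := by
        rw [hkeq]; push_cast [Nat.cast_sub (by omega : 1 ≤ ⌈x⌉₊)]; ring
      linarith
  set Fset : Finset (Fin n) := (Finset.Ico 2 (2+k)).attachFin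
    (fun m hm => lt_of_lt_of_le (Finset.mem_Ico.1 hm).2 h2k) with hF
  have hFcard : Fset.card = k := by
    rw [hF, Finset.card_attachFin, Nat.card_Ico]; omega
  have hi0F : i0 ∉ Fset := by
    rw [hF, Finset.mem_attachFin, Finset.mem_Ico]
    simp [hi0]
  have hbF : b ∉ Fset := by
    rw [hF, Finset.mem_attachFin, Finset.mem_Ico]
    simp [hbdef]
  set wi : Fin n → ℝ := NOMAux.wrow x Fset b with hwi
  have hwiRow : DuplexRow x i0 wi := by
    constructor
    · rw [hwi]; unfold NOMAux.wrow; rw [if_neg hi0F, if_neg hib]; ring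
    · intro j hj
      rw [hwi]; unfold NOMAux.wrow
      by_cases hjb : j = b
      · subst hjb; rw [if_neg hbF, if_pos rfl]; left; ring
      · rw [if_neg hjb]
        by_cases hjF : j ∈ Fset
        · rw [if_pos hjF]; right; right; ring
        · rw [if_neg hjF]; right; left; ring
  set lieRow : Fin n → ℝ := fun m => if m = i0 then 0 else -x with hlrow
  have hlieRow : DuplexRow x i0 lieRow := by
    constructor
    · simp [hlrow]
    · intro j hj; left; simp [hlrow, hj]
  obtain ⟨hSup, hInf⟩ := hNOM i0 wi lieRow hwiRow hlieRow
  set dLie : Fin n → Fin n → ℝ := fun j m => if m = j then 0 else -x with hdl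
  have hdLieDup : DuplexProfile x dLie := by
    constructor
    · intro j; simp [hdl]
    · intro i j hij
      left
      simp only [hdl]
      exact if_neg (fun h => hij h.symm)
  have hdLiei0 : dLie i0 = lieRow := rfl
  have hInfLie : (0:ℝ) ≤ sInf (utilSetX x M i0 wi lieRow) := by
    apply le_csInf
    · exact ⟨uA wi ((M dLie).block i0), dLie, hdLieDup, hdLiei0, rfl⟩
    · rintro v ⟨d, hd, hdi0, rfl⟩
      have hblk : (M d).block i0 = {i0} :=
        NOMAux.lie_isolates x hx1 d hd i0
          (fun j hj => by rw [hdi0]; simp [hlrow, hj]) (M d) (hM d hd)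
      rw [hblk]
      have h1 : uA wi {i0} = wi i0 := by unfold uA; rw [Finset.sum_singleton]
      rw [h1, hwiRow.1]
  set dT : Fin n → Fin n → ℝ := NOMAux.dTruth x Fset b i0 with hdt
  have hdTi0 : dT i0 = wi := by
    rw [hdt]; unfold NOMAux.dTruth; rw [if_pos rfl, hwi]
  have hdTDup : DuplexProfile x dT := by
    constructor
    · intro j
      by_cases h : j = i0
      · subst h
        rw [hdTi0]
        exact hwiRow.1
      · rw [hdt]; unfold NOMAux.dTruth; rw [if_neg h]; simp
    · intro i j hij
      by_cases h : i = i0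
      · subst h
        rw [hdTi0]
        exact hwiRow.2 j (fun hh => hij hh.symm)
      · rw [hdt]; unfold NOMAux.dTruth; rw [if_neg h]
        right; right
        exact if_neg (fun hh => hij hh.symm)
  have hblkT : (M dT).block i0 = Finset.univ := by
    by_contra hne
    have hlt := NOMAux.truth_main x hn hx1 Fset i0 b hib hi0F hbF
      (by rw [hFcard]; exact hxk) (M dT) hne
    rw [← hdt] at hlt
    exact absurd (hM dT hdTDup (NOMAux.gpart n)) (not_le.2 hlt)
  have hval : uA wi ((M dT).block i0) = (k:ℝ) - x := by
    rw [hblkT, hwi, NOMAux.uA_wrow, Finset.univ_inter, hFcard,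
        if_pos (Finset.mem_univ b)]
    ring
  have hmem : (k:ℝ) - x ∈ utilSetX x M i0 wi wi := ⟨dT, hdTDup, hdTi0, hval.symm⟩
  have hBdd : BddBelow (utilSetX x M i0 wi wi) := by
    refine ⟨-(n:ℝ) * x, ?_⟩
    rintro v ⟨d, hd, hdi0, rfl⟩
    have hlow : ∀ j, -x ≤ wi j := by
      intro j
      rw [hwi]; unfold NOMAux.wrow
      split_ifs <;> linarith
    have hc : (((M d).block i0).card : ℝ) ≤ (n:ℝ) := by
      have := Finset.card_le_card (Finset.subset_univ ((M d).block i0))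
      rw [Finset.card_univ, Fintype.card_fin] at this
      exact_mod_cast this
    calc -(n:ℝ) * x ≤ -(((M d).block i0).card : ℝ) * x := by nlinarith
      _ = ∑ j ∈ (M d).block i0, (-x) := by
          rw [Finset.sum_const, nsmul_eq_mul]; ring
      _ ≤ uA wi ((M d).block i0) := Finset.sum_le_sum (fun j _ => hlow j)
  have hInfTruth : sInf (utilSetX x M i0 wi wi) ≤ (k:ℝ) - x := csInf_le hBdd hmem
  linarith [hInf, hInfLie, hInfTruth, hkx]
end
end

section
/- For additively separable hedonic games on n agents with general duplex valuations with parameter x = 2n - 3 (declaration domain D = all weight profiles with off-diagonal values in {-(2n-3), 0, 1}), there exists a mechanism that is both optimal and non-obviously manipulable. -/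
noncomputable section

open Finset

namespace NOMaux

variable {n : ℕ}

instance instFT : Fintype (HGPartition n) :=
  Fintype.ofInjective HGPartition.block (fun a b h => by cases a; cases b; simpa using h)

/-- the all-singletons partition -/
def singletonPart (n : ℕ) : HGPartition n :=
  ⟨fun i => {i}, fun i => mem_singleton_self i, fun i j hj => by
    rw [mem_singleton] at hj; subst hj; rfl⟩

instance : Nonempty (HGPartition n) := ⟨singletonPart n⟩

lemma mem_block_symm (π : HGPartition n) {a b : Fin n} (h : b ∈ π.block a) :
    a ∈ π.block b := by
  rw [π.block_eq a b h]; exact π.mem_block a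

/-- number of in-block declared-enemy (ordered) pairs -/
def cnt (x : ℝ) (d : Fin n → Fin n → ℝ) (π : HGPartition n) : ℕ :=
  ∑ a, ((π.block a).filter (fun j => d a j = -x)).card

def key (x : ℝ) (d : Fin n → Fin n → ℝ) (π : HGPartition n) : ℝ ×ₗ ℝ :=
  toLex (swA d π, -(cnt x d π : ℝ))

/-- The mechanism: pick a partition maximizing (welfare, -enemy count) lexicographically. -/
def M (x : ℝ) (d : Fin n → Fin n → ℝ) : HGPartition n :=
  (Finset.exists_max_image (univ : Finset (HGPartition n)) (key x d) univ_nonempty).choose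

lemma M_max (x : ℝ) (d : Fin n → Fin n → ℝ) (π : HGPartition n) :
    key x d π ≤ key x d (M x d) :=
  (Finset.exists_max_image (univ : Finset (HGPartition n)) (key x d)
    univ_nonempty).choose_spec.2 π (mem_univ π)

lemma M_opt (x : ℝ) (d : Fin n → Fin n → ℝ) (π : HGPartition n) :
    swA d π ≤ swA d (M x d) := by
  have h := M_max x d π
  rw [key, key, Prod.Lex.le_iff] at h
  rcases h with h | ⟨h, _⟩
  · exact le_of_lt h
  · exact le_of_eq h

/-- Extract agent `i` into a singleton. -/
def extract (π : HGPartition n) (i : Fin n) : HGPartition n where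
  block a := if a = i then {i} else (π.block a).erase i
  mem_block a := by
    by_cases h : a = i
    · subst h; simp
    · simp only [if_neg h]; exact mem_erase.2 ⟨h, π.mem_block a⟩
  block_eq a b hb := by
    by_cases h : a = i
    · subst h
      rw [if_pos rfl, mem_singleton] at hb
      subst hb; rfl
    · rw [if_neg h, mem_erase] at hb
      rw [if_neg hb.1, if_neg h, π.block_eq a b hb.2]

lemma extract_swA (π : HGPartition n) (d : Fin n → Fin n → ℝ)
    (hdiag : ∀ a, d a a = 0) (i : Fin n) :
    swA d (extract π i)
      = swA d π - ∑ k ∈ (π.block i).erase i, (d i k + d k i) := by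
  have hb1 : uA (d i) ((extract π i).block i) = 0 := by
    simp [extract, uA, hdiag]
  have hb2 : ∀ a, a ≠ i → uA (d a) ((extract π i).block a)
      = uA (d a) (π.block a) - (if a ∈ π.block i then d a i else 0) := by
    intro a ha
    simp only [extract, uA, if_neg ha]
    by_cases h : i ∈ π.block a
    · rw [Finset.sum_erase_eq_sub h, if_pos (mem_block_symm π h)]
    · rw [Finset.erase_eq_of_notMem h, if_neg (fun hc => h (mem_block_symm π hc)), sub_zero]
  have e1 : swA d (extract π i)
      = uA (d i) ((extract π i).block i)
        + ∑ a ∈ univ.erase i, uA (d a) ((extract π i).block a) := by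
    rw [swA, ← Finset.add_sum_erase _ _ (mem_univ i)]
  have e2 : swA d π = uA (d i) (π.block i)
        + ∑ a ∈ univ.erase i, uA (d a) (π.block a) := by
    rw [swA, ← Finset.add_sum_erase _ _ (mem_univ i)]
  rw [e1, e2, hb1, zero_add]
  rw [Finset.sum_congr rfl (fun a ha => hb2 a (mem_erase.1 ha).1)]
  rw [Finset.sum_sub_distrib]
  have e3 : ∑ a ∈ univ.erase i, (if a ∈ π.block i then d a i else 0)
      = ∑ a ∈ (π.block i).erase i, d a i := by
    rw [Finset.sum_ite_mem]
    congr 1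
    ext a; simp [and_comm]
  have e4 : uA (d i) (π.block i) = ∑ k ∈ (π.block i).erase i, d i k := by
    rw [uA, ← Finset.add_sum_erase _ _ (π.mem_block i), hdiag, zero_add]
  rw [e3, e4, Finset.sum_add_distrib]
  ring

lemma extract_cnt {x : ℝ} (hx : x ≠ 0) (π : HGPartition n) (d : Fin n → Fin n → ℝ)
    (hdiag : ∀ a, d a a = 0) {i j : Fin n} (hj : j ∈ π.block i) (hji : j ≠ i)
    (hij : d i j = -x) :
    cnt x d (extract π i) < cnt x d π := by
  have hbl : (extract π i).block i = {i} := by simp [extract]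
  have hb1 : (((extract π i).block i).filter (fun k => d i k = -x)).card = 0 := by
    rw [hbl, Finset.filter_singleton, hdiag,
      if_neg (fun h => hx (by linarith)), Finset.card_empty]
  have hb2 : ∀ a, a ≠ i → (((extract π i).block a).filter (fun k => d a k = -x)).card
      ≤ ((π.block a).filter (fun k => d a k = -x)).card := by
    intro a ha
    apply Finset.card_le_card
    intro k hk
    simp only [extract, if_neg ha, mem_filter, mem_erase] at hk ⊢
    exact ⟨hk.1.2, hk.2⟩
  have hbig : 1 ≤ ((π.block i).filter (fun k => d i k = -x)).card := by
    rw [Nat.one_le_iff_ne_zero, ← Nat.pos_iff_ne_zero, Finset.card_pos]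
    exact ⟨j, mem_filter.2 ⟨hj, hij⟩⟩
  have e1 : cnt x d (extract π i)
      = ∑ a ∈ univ.erase i, (((extract π i).block a).filter (fun k => d a k = -x)).card := by
    rw [cnt, ← Finset.add_sum_erase _ _ (mem_univ i), hb1, zero_add]
  have e2 : cnt x d π
      = ((π.block i).filter (fun k => d i k = -x)).card
        + ∑ a ∈ univ.erase i, ((π.block a).filter (fun k => d a k = -x)).card := by
    rw [cnt, ← Finset.add_sum_erase _ _ (mem_univ i)]
  rw [e1, e2]
  calc ∑ a ∈ univ.erase i, (((extract π i).block a).filter (fun k => d a k = -x)).card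
      ≤ ∑ a ∈ univ.erase i, ((π.block a).filter (fun k => d a k = -x)).card :=
        Finset.sum_le_sum (fun a ha => hb2 a (mem_erase.1 ha).1)
    _ < _ := by omega

end NOMaux
namespace NOMaux

variable {n : ℕ}

lemma no_enemy (hn : 2 ≤ n) (d : Fin n → Fin n → ℝ)
    (hd : DuplexProfile (2 * (n : ℝ) - 3) d) :
    ∀ i j : Fin n, j ∈ ((M (2 * (n : ℝ) - 3) d).block i) → d i j ≠ -(2 * (n : ℝ) - 3) := by
  set X : ℝ := 2 * (n : ℝ) - 3 with hXdef
  have hn' : (2 : ℝ) ≤ (n : ℝ) := by exact_mod_cast hn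
  have hX1 : (1 : ℝ) ≤ X := by rw [hXdef]; linarith
  have hle1 : ∀ a b : Fin n, d a b ≤ 1 := by
    intro a b
    by_cases h : a = b
    · subst h; rw [hd.1 a]; norm_num
    · rcases hd.2 a b h with h' | h' | h' <;> rw [h'] <;> linarith
  intro i j hj hij
  set π := M X d with hπ
  have hji : j ≠ i := by
    intro h
    rw [h, hd.1 i] at hij
    linarith
  set T := (π.block i).erase i with hT
  have hjT : j ∈ T := mem_erase.2 ⟨hji, hj⟩
  -- cardinality bound : (T.erase j).card + 2 ≤ n
  have hcard : (T.erase j).card + 2 ≤ n := by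
    have h1 : (T.erase j).card + 1 = T.card := Finset.card_erase_add_one hjT
    have h2 : T.card + 1 = (π.block i).card := Finset.card_erase_add_one (π.mem_block i)
    have h3 : (π.block i).card ≤ n := by
      simpa using Finset.card_le_card (Finset.subset_univ (π.block i))
    omega
  -- the welfare change is nonpositive
  have hS : (0:ℝ) ≤ - ∑ k ∈ T, (d i k + d k i) := by
    have e : ∑ k ∈ T, (d i k + d k i)
        = (d i j + d j i) + ∑ k ∈ T.erase j, (d i k + d k i) :=
      (Finset.add_sum_erase _ _ hjT).symm
    have b1 : ∑ k ∈ T.erase j, (d i k + d k i) ≤ (T.erase j).card * 2 := by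
      calc ∑ k ∈ T.erase j, (d i k + d k i) ≤ ∑ _k ∈ T.erase j, (2:ℝ) :=
            Finset.sum_le_sum (fun k _ => by
              have := hle1 i k; have := hle1 k i; linarith)
        _ = (T.erase j).card * 2 := by rw [Finset.sum_const, nsmul_eq_mul]
    have b2 : ((T.erase j).card : ℝ) ≤ (n : ℝ) - 2 := by
      have : ((T.erase j).card : ℝ) + 2 ≤ (n : ℝ) := by exact_mod_cast hcard
      linarith
    have b3 : d i j + d j i ≤ 1 - X := by
      rw [hij]; have := hle1 j i; linarith
    rw [e]
    have : ((T.erase j).card : ℝ) * 2 ≤ ((n:ℝ) - 2) * 2 := by linarith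
    rw [hXdef] at b3
    linarith
  have hsw : swA d π ≤ swA d (extract π i) := by
    rw [extract_swA π d hd.1 i, ← hT]
    linarith
  have hcnt : cnt X d (extract π i) < cnt X d π :=
    extract_cnt (by intro h; rw [h] at hX1; linarith) π d hd.1 hj hji hij
  have hmax := M_max X d (extract π i)
  rw [← hπ, key, key, Prod.Lex.le_iff] at hmax
  rcases hmax with h | ⟨h1, h2⟩
  · exact absurd h (not_lt.2 hsw)
  · simp only [ofLex_toLex] at h2
    have : (cnt X d π : ℝ) ≤ (cnt X d (extract π i) : ℝ) := by linarith
    have : cnt X d π ≤ cnt X d (extract π i) := by exact_mod_cast this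
    omega

/-- the partition grouping `F` together and everyone else a singleton -/
def grouped (F : Finset (Fin n)) : HGPartition n where
  block j := if j ∈ F then F else {j}
  mem_block j := by
    by_cases h : j ∈ F
    · rw [if_pos h]; exact h
    · rw [if_neg h]; exact mem_singleton_self j
  block_eq a b hb := by
    by_cases h : a ∈ F
    · rw [if_pos h] at hb
      rw [if_pos hb, if_pos h]
    · rw [if_neg h, mem_singleton] at hb
      subst hb; rfl

end NOMaux
theorem exists_optimal_NOM_duplex_boundary (n : ℕ) :
    ∃ M : (Fin n → Fin n → ℝ) → HGPartition n,
      OptimalX (2 * (n : ℝ) - 3) M ∧ NOM_X (2 * (n : ℝ) - 3) M := by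
  refine ⟨NOMaux.M (2 * (n : ℝ) - 3), fun d _ π => NOMaux.M_opt _ d π, ?_⟩
  intro i wi di hwi hdi
  set X : ℝ := 2 * (n : ℝ) - 3 with hXdef
  set MM := NOMaux.M (n := n) X with hMM
  rcases lt_or_ge n 2 with hn | hn
  · -- degenerate case n = 1
    have hn1 : n = 1 := by have := i.pos; omega
    subst hn1
    have hall : ∀ a b : Fin 1, a = b := fun a b => Fin.ext (by omega)
    have hsingle : ∀ di' : Fin 1 → ℝ, DuplexRow X i di' →
        utilSetX X MM i wi di' = {0} := by
      intro di' hdi'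
      have hb : ∀ d : Fin 1 → Fin 1 → ℝ, (MM d).block i = {i} := by
        intro d
        ext k
        rw [mem_singleton]
        exact ⟨fun _ => hall k i, fun h => h ▸ (MM d).mem_block i⟩
      ext v
      simp only [utilSetX, Set.mem_setOf_eq, Set.mem_singleton_iff]
      constructor
      · rintro ⟨d, hd, hdii, rfl⟩
        rw [hb d, uA, Finset.sum_singleton, hwi.1]
      · intro hv
        refine ⟨fun _ => di', ⟨fun a => ?_, fun a b hab => absurd (hall a b) hab⟩, rfl, ?_⟩
        · rw [hall a i]; exact hdi'.1
        · rw [hb, uA, Finset.sum_singleton, hwi.1, hv]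
    rw [hsingle di hdi, hsingle wi hwi]
    exact ⟨le_refl _, le_refl _⟩
  · -- main case n ≥ 2
    have hn' : (2:ℝ) ≤ (n:ℝ) := by exact_mod_cast hn
    have hX1 : (1:ℝ) ≤ X := by rw [hXdef]; linarith
    set P := univ.filter (fun j => wi j = 1) with hP
    have hiP : i ∉ P := by simp [hP, hwi.1]
    set F := insert i P with hF
    have hiF : i ∈ F := mem_insert_self i P
    -- every utility set is nonempty
    have hne : ∀ di' : Fin n → ℝ, DuplexRow X i di' →
        (utilSetX X MM i wi di').Nonempty := by
      intro di' hdi'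
      refine ⟨_, fun a => if a = i then di' else fun _ => 0, ⟨?_, ?_⟩, if_pos rfl, rfl⟩
      · intro a
        dsimp only
        by_cases h : a = i
        · rw [if_pos h, h]; exact hdi'.1
        · rw [if_neg h]
      · intro a b hab
        dsimp only
        by_cases h : a = i
        · rw [if_pos h]
          exact hdi'.2 b (fun hc => hab ((hc.trans h.symm).symm))
        · rw [if_neg h]; right; left; rfl
    -- upper bound on any achievable utility
    have hub : ∀ di' : Fin n → ℝ, ∀ v ∈ utilSetX X MM i wi di', v ≤ (P.card : ℝ) := by
      rintro di' v ⟨d, hd, hdrow, rfl⟩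
      calc uA wi ((MM d).block i) = ∑ k ∈ (MM d).block i, wi k := rfl
        _ ≤ ∑ k ∈ (MM d).block i, (if k ∈ P then (1:ℝ) else 0) := by
            apply Finset.sum_le_sum
            intro k hk
            by_cases hkP : k ∈ P
            · rw [if_pos hkP]; exact le_of_eq (mem_filter.1 hkP).2
            · rw [if_neg hkP]
              by_cases hki : k = i
              · rw [hki, hwi.1]
              · rcases hwi.2 k hki with h | h | h
                · rw [h]; linarith
                · rw [h]
                · exact absurd (mem_filter.2 ⟨mem_univ k, h⟩) hkP
        _ = ((((MM d).block i).filter (fun k => k ∈ P)).card : ℝ) :=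
            Finset.sum_boole _ _
        _ ≤ (P.card : ℝ) := by
            exact_mod_cast Finset.card_le_card
              (fun k hk => (mem_filter.1 hk).2 : ((MM d).block i).filter (fun k => k ∈ P) ⊆ P)
    -- the best-case profile for truthful reporting
    set dstar : Fin n → Fin n → ℝ := fun a b =>
      if a = i then wi b else if b = a then 0 else if a ∈ F ∧ b ∈ F then 1 else -X
      with hds
    have hdsrow : dstar i = wi := funext (fun b => if_pos rfl)
    have hdsd : DuplexProfile X dstar := by
      constructor
      · intro a
        by_cases h : a = i
        · simp only [hds]; rw [if_pos h, h]; exact hwi.1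
        · simp [hds, h]
      · intro a b hab
        by_cases h : a = i
        · subst h
          simpa [hds] using hwi.2 b (Ne.symm hab)
        · have hba : ¬ b = a := fun hc => hab hc.symm
          by_cases h2 : a ∈ F ∧ b ∈ F
          · right; right; simp only [hds]; rw [if_neg h, if_neg hba, if_pos h2]
          · left; simp only [hds]; rw [if_neg h, if_neg hba, if_neg h2]
    have hA : ∀ j, j ∉ F → (MM dstar).block j = {j} := by
      intro j hjF
      have hji : ¬ j = i := fun h => hjF (h ▸ hiF)
      ext k
      rw [mem_singleton]
      constructor
      · intro hk
        by_contra hkj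
        apply NOMaux.no_enemy hn dstar hdsd j k hk
        have hnF : ¬ (j ∈ F ∧ k ∈ F) := fun hc => hjF hc.1
        simp only [hds]
        rw [if_neg hji, if_neg hkj, if_neg hnF, hXdef]
      · intro h; rw [h]; exact (MM dstar).mem_block j
    have hB : ∀ j, j ∈ F → (MM dstar).block j ⊆ F := by
      intro j hjF k hk
      by_contra hkF
      have hjk : j ∈ (MM dstar).block k := by
        rw [(MM dstar).block_eq j k hk]; exact (MM dstar).mem_block j
      rw [hA k hkF, mem_singleton] at hjk
      exact hkF (hjk ▸ hjF)
    have hC : ∀ j ∈ F, ∀ k ∈ F, ¬ k = j → dstar j k = 1 := by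
      intro j hj k hk hkj
      by_cases h : j = i
      · subst h
        have hkP : k ∈ P := by
          rcases mem_insert.1 hk with h' | h'
          · exact absurd h' hkj
          · exact h'
        simpa [hds] using (mem_filter.1 hkP).2
      · simp only [hds]; rw [if_neg h, if_neg hkj, if_pos ⟨hj, hk⟩]
    have hD : ∀ j ∈ F, ∀ B : Finset (Fin n), B ⊆ F → j ∈ B →
        uA (dstar j) B = (B.card : ℝ) - 1 := by
      intro j hj B hBF hjB
      rw [uA, ← Finset.add_sum_erase _ _ hjB, hdsd.1 j, zero_add]
      rw [Finset.sum_congr rfl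
        (fun k hk => hC j hj k (hBF (mem_erase.1 hk).2) (mem_erase.1 hk).1)]
      rw [Finset.sum_const, nsmul_eq_mul, mul_one, Finset.card_erase_of_mem hjB]
      have h1 : 1 ≤ B.card := Finset.card_pos.2 ⟨j, hjB⟩
      rw [Nat.cast_sub h1, Nat.cast_one]
    have hout : ∀ j, j ∉ F → uA (dstar j) ((MM dstar).block j) = 0 := by
      intro j hj; rw [hA j hj, uA, Finset.sum_singleton, hdsd.1 j]
    have hsw1 : swA dstar (MM dstar) = ∑ j ∈ F, ((((MM dstar).block j).card : ℝ) - 1) := by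
      rw [swA, ← Finset.sum_subset (Finset.subset_univ F) (fun j _ hj => hout j hj)]
      exact Finset.sum_congr rfl
        (fun j hj => hD j hj _ (hB j hj) ((MM dstar).mem_block j))
    have hswg : swA dstar (NOMaux.grouped F) = ∑ j ∈ F, ((F.card : ℝ) - 1) := by
      rw [swA, ← Finset.sum_subset (Finset.subset_univ F) (fun j _ hj => ?_)]
      · apply Finset.sum_congr rfl
        intro j hj
        have hbj : (NOMaux.grouped F).block j = F := if_pos hj
        rw [hbj]
        exact hD j hj F (Finset.Subset.refl F) hj
      · have hbj : (NOMaux.grouped F).block j = {j} := if_neg hj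
        rw [hbj, uA, Finset.sum_singleton, hdsd.1 j]
    have hbiF : (MM dstar).block i = F := by
      by_contra hne'
      have hlt : ((MM dstar).block i).card < F.card :=
        Finset.card_lt_card (Finset.ssubset_iff_subset_ne.2 ⟨hB i hiF, hne'⟩)
      have h1 : swA dstar (MM dstar) < ∑ j ∈ F, ((F.card:ℝ) - 1) := by
        rw [hsw1]
        apply Finset.sum_lt_sum
        · intro j hj
          have h2 : ((MM dstar).block j).card ≤ F.card :=
            Finset.card_le_card (hB j hj)
          have h3 : ((((MM dstar).block j).card : ℕ) : ℝ) ≤ (F.card : ℝ) := by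
            exact_mod_cast h2
          linarith
        · refine ⟨i, hiF, ?_⟩
          have h3 : ((((MM dstar).block i).card : ℕ) : ℝ) < (F.card : ℝ) := by
            exact_mod_cast hlt
          linarith
      rw [← hswg] at h1
      exact absurd (NOMaux.M_opt X dstar (NOMaux.grouped F)) (not_le.2 h1)
    have hval : uA wi ((MM dstar).block i) = (P.card : ℝ) := by
      rw [hbiF, uA, hF, Finset.sum_insert hiP, hwi.1, zero_add]
      rw [Finset.sum_congr rfl (fun k hk => (mem_filter.1 hk).2)]
      rw [Finset.sum_const, nsmul_eq_mul, mul_one]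
    have hmemP : ((P.card : ℝ)) ∈ utilSetX X MM i wi wi :=
      ⟨dstar, hdsd, hdsrow, hval.symm⟩
    -- sup chain
    have hsup : sSup (utilSetX X MM i wi di) ≤ sSup (utilSetX X MM i wi wi) := by
      have h1 : sSup (utilSetX X MM i wi di) ≤ (P.card : ℝ) :=
        csSup_le (hne di hdi) (hub di)
      have h2 : (P.card : ℝ) ≤ sSup (utilSetX X MM i wi wi) :=
        le_csSup ⟨(P.card : ℝ), fun v hv => hub wi v hv⟩ hmemP
      linarith
    -- inf chain
    have hlb : ∀ v ∈ utilSetX X MM i wi wi, (0:ℝ) ≤ v := by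
      rintro v ⟨d, hd, hdrow, rfl⟩
      rw [uA]
      apply Finset.sum_nonneg
      intro k hk
      by_cases hki : k = i
      · rw [hki, hwi.1]
      · rcases hwi.2 k hki with h | h | h
        · exfalso
          apply NOMaux.no_enemy hn d hd i k hk
          rw [hdrow, h, hXdef]
        · rw [h]
        · rw [h]; norm_num
    set ddag : Fin n → Fin n → ℝ := fun a b =>
      if a = i then di b else if b = a then 0 else -X with hdg
    have hdgd : DuplexProfile X ddag := by
      constructor
      · intro a
        by_cases h : a = i
        · simp only [hdg]; rw [if_pos h, h]; exact hdi.1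
        · simp [hdg, h]
      · intro a b hab
        by_cases h : a = i
        · subst h
          simpa [hdg] using hdi.2 b (Ne.symm hab)
        · left; simp only [hdg]; rw [if_neg h, if_neg (fun hc => hab hc.symm)]
    have hAd : ∀ j, ¬ j = i → (MM ddag).block j = {j} := by
      intro j hji
      ext k
      rw [mem_singleton]
      constructor
      · intro hk
        by_contra hkj
        apply NOMaux.no_enemy hn ddag hdgd j k hk
        simp only [hdg]
        rw [if_neg hji, if_neg hkj, hXdef]
      · intro h; rw [h]; exact (MM ddag).mem_block j
    have hbii : (MM ddag).block i = {i} := by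
      ext k
      rw [mem_singleton]
      constructor
      · intro hk
        by_contra hki
        have hik : i ∈ (MM ddag).block k := by
          rw [(MM ddag).block_eq i k hk]; exact (MM ddag).mem_block i
        rw [hAd k hki, mem_singleton] at hik
        exact hki hik.symm
      · intro h; rw [h]; exact (MM ddag).mem_block i
    have h0mem : (0:ℝ) ∈ utilSetX X MM i wi di := by
      refine ⟨ddag, hdgd, funext (fun b => if_pos rfl), ?_⟩
      rw [hbii, uA, Finset.sum_singleton, hwi.1]
    have hbdd : BddBelow (utilSetX X MM i wi di) := by
      refine ⟨(n:ℝ) * (-X), ?_⟩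
      rintro v ⟨d, hd, hdrow, rfl⟩
      have h1 : ∀ k ∈ (MM d).block i, -X ≤ wi k := by
        intro k _
        by_cases hki : k = i
        · rw [hki, hwi.1]; linarith
        · rcases hwi.2 k hki with h | h | h <;> rw [h] <;> linarith
      have h2 := Finset.card_nsmul_le_sum ((MM d).block i) wi (-X) h1
      rw [nsmul_eq_mul] at h2
      have h3 : ((((MM d).block i).card : ℕ) : ℝ) ≤ (n : ℝ) := by
        exact_mod_cast (Finset.card_le_univ _).trans_eq (Fintype.card_fin n)
      have h4 : (n:ℝ) * (-X) ≤ (((MM d).block i).card : ℝ) * (-X) :=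
        mul_le_mul_of_nonpos_right h3 (by linarith)
      calc (n:ℝ) * (-X) ≤ (((MM d).block i).card : ℝ) * (-X) := h4
        _ ≤ ∑ k ∈ (MM d).block i, wi k := h2
        _ = uA wi ((MM d).block i) := rfl
    have hinf : sInf (utilSetX X MM i wi di) ≤ sInf (utilSetX X MM i wi wi) := by
      have h1 : sInf (utilSetX X MM i wi di) ≤ 0 := csInf_le hbdd h0mem
      have h2 : (0:ℝ) ≤ sInf (utilSetX X MM i wi wi) := le_csInf (hne wi hwi) hlb
      linarith
    exact ⟨hsup, hinf⟩
end
end
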